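/- arXiv:1907.07968 — 5 statements merged into one kernel-verified Lean document; each statement's English description precedes it below -/
import Mathlib

section
/- Let H be a complex Hilbert space. For N ∈ ℕ, N ≥ 1, and θ ∈ [0,2π), define S_{N,θ} f = Σ_{k=0}^{N} a_k e^{ikθ} and P_{N,θ} f = f_{1−1/N}(θ) = Σ_{k=0}^{∞} a_k (1−1/N)^k e^{ikθ} for f ∈ D(𝔻, H). Then there is an absolute constant c > 0 such that ‖S_{N,θ} f − P_{N,θ} f‖_H ≤ c ‖f‖_{D(𝔻,H)} for all N ≥ 1, θ, and f; moreover, for each fixed f ∈ D(𝔻, H), sup_{θ∈[0,2π)} ‖S_{N,θ} f − P_{N,θ} f‖_H → 0 as N → ∞. -/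
open MeasureTheory Filter Complex Set

noncomputable section

/-- The partial sum `S_{N,θ} f = ∑_{k=0}^{N} a_k e^{ikθ}`. -/
def partialSum1 {H : Type*} [NormedAddCommGroup H] [NormedSpace ℂ H]
    (a : ℕ → H) (θ : ℝ) (N : ℕ) : H :=
  ∑ k ∈ Finset.range (N + 1), Complex.exp (Complex.I * k * θ) • a k

/-- The Abel mean `P_{N,θ} f = f_{1-1/N}(θ) = ∑_{k=0}^{∞} a_k (1-1/N)^k e^{ikθ}`. -/
def abelMean1 {H : Type*} [NormedAddCommGroup H] [NormedSpace ℂ H]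
    (a : ℕ → H) (θ : ℝ) (N : ℕ) : H :=
  ∑' k : ℕ, ((((1 : ℝ) - 1 / (N : ℝ) : ℝ) : ℂ) ^ k * Complex.exp (Complex.I * k * θ)) • a k

/-!
With `r = 1 - 1/N`, the `k`-th term of `S_{N,θ} f - P_{N,θ} f` has norm `w_k ‖a_k‖`, where
`w_k = 1 - r^k ≤ k/N` for `k ≤ N` and `w_k = r^k` for `k > N`. Cauchy–Schwarz against the Dirichlet
weights `k + 1` reduces the uniform bound to `∑ w_k² / (k + 1) ≤ 3`, which holds because the terms
are at most `1/N` for `k ≤ N` and at most `r^k / N` beyond. For the convergence, split at a fixed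
`M`: the first `M` terms contribute at most `(M/N) ∑_{k<M} ‖a_k‖`, the others at most `√3` times the
Dirichlet norm of the tail `(a_k)_{k ≥ M}`.
-/

theorem summable_mul_and_tsum_mul_le_sqrt_mul_sqrt {ι : Type*} {ρ u v : ι → ℝ}
    (hρ : ∀ i, 0 < ρ i) (hu : ∀ i, 0 ≤ u i) (hv : ∀ i, 0 ≤ v i)
    (hu2 : Summable fun i => u i ^ 2 / ρ i) (hv2 : Summable fun i => ρ i * v i ^ 2) :
    (Summable fun i => u i * v i) ∧
      ∑' i, u i * v i ≤ √(∑' i, u i ^ 2 / ρ i) * √(∑' i, ρ i * v i ^ 2) := by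
  have hsplit : ∀ i, u i * v i = u i / √(ρ i) * (√(ρ i) * v i) := fun i => by
    field_simp [(Real.sqrt_pos.2 (hρ i)).ne']
  have hsq_u : ∀ i, (u i / √(ρ i)) ^ (2 : ℝ) = u i ^ 2 / ρ i := fun i => by
    rw [Real.rpow_two, div_pow, Real.sq_sqrt (hρ i).le]
  have hsq_v : ∀ i, (√(ρ i) * v i) ^ (2 : ℝ) = ρ i * v i ^ 2 := fun i => by
    rw [Real.rpow_two, mul_pow, Real.sq_sqrt (hρ i).le]
  obtain ⟨hsum, hle⟩ := Real.summable_and_inner_le_Lp_mul_Lq_tsum_of_nonneg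
    (f := fun i => u i / √(ρ i)) (g := fun i => √(ρ i) * v i) Real.HolderConjugate.two_two
    (fun i => div_nonneg (hu i) (Real.sqrt_nonneg _))
    (fun i => mul_nonneg (Real.sqrt_nonneg _) (hv i))
    (hu2.congr fun i => (hsq_u i).symm) (hv2.congr fun i => (hsq_v i).symm)
  simp only [← hsplit, hsq_u, hsq_v, ← Real.sqrt_eq_rpow] at hsum hle
  exact ⟨hsum, hle⟩

/-- `fejerWeight r N k * ‖a_k‖` is the norm of the `k`-th term of `S_{N,θ} f - f_r(θ)`. -/
def fejerWeight (r : ℝ) (N k : ℕ) : ℝ := if k ≤ N then 1 - r ^ k else r ^ k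

theorem one_sub_one_div_natCast_nonneg (N : ℕ) : 0 ≤ 1 - 1 / (N : ℝ) := by
  simpa [one_div] using Nat.cast_inv_le_one (α := ℝ) N

theorem one_sub_one_div_natCast_le_one (N : ℕ) : 1 - 1 / (N : ℝ) ≤ 1 := by
  simp only [sub_le_self_iff, one_div, inv_nonneg, Nat.cast_nonneg]

section WeightBounds

variable {r : ℝ} (hr₀ : 0 ≤ r) (hr₁ : r ≤ 1)
include hr₀ hr₁

theorem fejerWeight_nonneg (N k : ℕ) : 0 ≤ fejerWeight r N k := by
  unfold fejerWeight
  split_ifs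
  · linarith [pow_le_one₀ hr₀ hr₁ (n := k)]
  · positivity

theorem fejerWeight_le_one (N k : ℕ) : fejerWeight r N k ≤ 1 := by
  unfold fejerWeight
  split_ifs
  · linarith [pow_nonneg hr₀ k]
  · exact pow_le_one₀ hr₀ hr₁

theorem fejerWeight_le_mul {N : ℕ} (hN : 1 ≤ (N + 1) * (1 - r)) (k : ℕ) :
    fejerWeight r N k ≤ k * (1 - r) := by
  unfold fejerWeight
  split_ifs with hk
  · linarith [one_add_mul_sub_le_pow (by linarith : (-1 : ℝ) ≤ r) k]
  · have : (N : ℝ) + 1 ≤ k := by exact_mod_cast Nat.lt_of_not_le hk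
    nlinarith [pow_le_one₀ hr₀ hr₁ (n := k)]

theorem abs_ite_sub_pow_eq_fejerWeight (N k : ℕ) :
    |(if k ≤ N then 1 else 0) - r ^ k| = fejerWeight r N k := by
  unfold fejerWeight
  split_ifs
  · exact abs_of_nonneg (sub_nonneg.2 (pow_le_one₀ hr₀ hr₁))
  · rw [zero_sub, abs_neg, abs_of_nonneg (pow_nonneg hr₀ k)]

end WeightBounds

section AbelRadius

variable {N : ℕ} (hN : 1 ≤ N)
include hN

theorem fejerWeight_le_div (k : ℕ) : fejerWeight (1 - 1 / N) N k ≤ k / N := by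
  refine (fejerWeight_le_mul (one_sub_one_div_natCast_nonneg N) (one_sub_one_div_natCast_le_one N)
    (by field_simp; simp) k).trans_eq ?_
  rw [sub_sub_cancel, mul_one_div]

theorem fejerWeight_sq_div_le (k : ℕ) :
    fejerWeight (1 - 1 / N) N k ^ 2 / ((k : ℝ) + 1) ≤ 1 / N := by
  have hr₀ := one_sub_one_div_natCast_nonneg N
  have hr₁ := one_sub_one_div_natCast_le_one N
  have hw₀ := fejerWeight_nonneg hr₀ hr₁ N k
  rw [div_le_iff₀ (by positivity), one_div_mul_eq_div]
  calc fejerWeight (1 - 1 / N) N k ^ 2 ≤ fejerWeight (1 - 1 / N) N k :=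
        pow_le_of_le_one hw₀ (fejerWeight_le_one hr₀ hr₁ N k) two_ne_zero
    _ ≤ k / N := fejerWeight_le_div hN k
    _ ≤ (k + 1) / N := by gcongr; linarith

theorem fejerWeight_sq_div_tail_le (k : ℕ) :
    fejerWeight (1 - 1 / N) N (k + (N + 1)) ^ 2 / (((k + (N + 1) : ℕ) : ℝ) + 1) ≤
      (1 - 1 / N) ^ k / N := by
  have hr₀ := one_sub_one_div_natCast_nonneg N
  have hr₁ := one_sub_one_div_natCast_le_one N
  have hw : fejerWeight (1 - 1 / N) N (k + (N + 1)) ^ 2 ≤ (1 - 1 / N) ^ k := by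
    rw [fejerWeight, if_neg (by omega), ← pow_mul]
    exact pow_le_pow_of_le_one hr₀ hr₁ (by omega)
  have hden : (N : ℝ) ≤ ((k + (N + 1) : ℕ) : ℝ) + 1 := by
    push_cast; linarith [Nat.cast_nonneg (α := ℝ) k]
  exact div_le_div₀ (by positivity) hw (by positivity) hden

theorem summable_fejerWeight_sq_div :
    Summable fun k : ℕ => fejerWeight (1 - 1 / N) N k ^ 2 / ((k : ℝ) + 1) := by
  have hr₀ := one_sub_one_div_natCast_nonneg N
  refine (summable_nat_add_iff (N + 1)).1 (Summable.of_nonneg_of_le (fun k => by positivity)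
    (fejerWeight_sq_div_tail_le hN) ?_)
  exact (summable_geometric_of_lt_one hr₀ (by simp; omega)).div_const _

theorem tsum_fejerWeight_sq_div_le :
    ∑' k : ℕ, fejerWeight (1 - 1 / N) N k ^ 2 / ((k : ℝ) + 1) ≤ 3 := by
  have hN' : (1 : ℝ) ≤ N := by exact_mod_cast hN
  have hN₀ : (N : ℝ) ≠ 0 := by positivity
  have hr₀ := one_sub_one_div_natCast_nonneg N
  have hr₁ : 1 - 1 / (N : ℝ) < 1 := by simp; omega
  have hhead : ∑ k ∈ Finset.range (N + 1), fejerWeight (1 - 1 / N) N k ^ 2 / ((k : ℝ) + 1) ≤ 2 :=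
    calc _ ≤ (Finset.range (N + 1)).card • (1 / (N : ℝ)) :=
          Finset.sum_le_card_nsmul _ _ _ fun k _ => fejerWeight_sq_div_le hN k
      _ = 1 + 1 / N := by simp [field]
      _ ≤ 2 := by linarith [div_le_one_of_le₀ hN' (by positivity : (0 : ℝ) ≤ N)]
  have htail : ∑' k : ℕ, fejerWeight (1 - 1 / N) N (k + (N + 1)) ^ 2 /
      (((k + (N + 1) : ℕ) : ℝ) + 1) ≤ 1 :=
    calc _ ≤ ∑' k : ℕ, (1 - 1 / (N : ℝ)) ^ k / N :=
          Summable.tsum_le_tsum (fejerWeight_sq_div_tail_le hN)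
            ((summable_nat_add_iff (N + 1)).2 (summable_fejerWeight_sq_div hN))
            ((summable_geometric_of_lt_one hr₀ hr₁).div_const _)
      _ = 1 := by
          rw [tsum_div_const, tsum_geometric_of_lt_one hr₀ hr₁, sub_sub_cancel, one_div, inv_inv,
            div_self hN₀]
  rw [← (summable_fejerWeight_sq_div hN).sum_add_tsum_nat_add (N + 1)]
  linarith

end AbelRadius

theorem norm_partialSum1_sub_abelMean1_le {H : Type*} [NormedAddCommGroup H] [NormedSpace ℂ H]
    [CompleteSpace H] {a : ℕ → H} {N : ℕ}
    (ha : Summable fun k => fejerWeight (1 - 1 / N) N k * ‖a k‖) (θ : ℝ) :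
    ‖partialSum1 a θ N - abelMean1 a θ N‖ ≤ ∑' k, fejerWeight (1 - 1 / N) N k * ‖a k‖ := by
  rw [abelMean1]
  set r : ℝ := 1 - 1 / N
  have hr₀ : 0 ≤ r := one_sub_one_div_natCast_nonneg N
  have hr₁ : r ≤ 1 := one_sub_one_div_natCast_le_one N
  set e : ℕ → ℂ := fun k => Complex.exp (Complex.I * k * θ)
  have he : ∀ k, ‖e k‖ = 1 := fun k => by simp [e, Complex.norm_exp]
  set g : ℕ → H := fun k => ((((if k ≤ N then 1 else 0) - r ^ k : ℝ) : ℂ) * e k) • a k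
  have hg : ∀ k, ‖g k‖ = fejerWeight r N k * ‖a k‖ := fun k => by
    rw [norm_smul, norm_mul, he, mul_one, Complex.norm_real, Real.norm_eq_abs,
      abs_ite_sub_pow_eq_fejerWeight hr₀ hr₁]
  have hS : HasSum (fun k => if k ≤ N then e k • a k else 0) (partialSum1 a θ N) := by
    rw [partialSum1, ← Finset.sum_congr rfl fun k hk => if_pos (Finset.mem_range_succ_iff.1 hk)]
    exact hasSum_sum_of_ne_finset_zero fun k hk => if_neg (by simpa using hk)
  have hP : ∑' k, ((r : ℂ) ^ k * e k) • a k = partialSum1 a θ N - ∑' k, g k := by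
    refine ((hS.sub (Summable.of_norm (by simpa only [hg] using ha)).hasSum).congr_fun
      fun k => ?_).tsum_eq
    simp only [g]
    split_ifs <;> push_cast <;> module
  rw [hP, sub_sub_cancel]
  exact (norm_tsum_le_tsum_norm (by simpa only [hg] using ha)).trans_eq (tsum_congr hg)

theorem norm_partialSum1_sub_abelMean1_le_head_add_tail {H : Type*} [NormedAddCommGroup H]
    [NormedSpace ℂ H] [CompleteSpace H] {a : ℕ → H}
    (ha : Summable fun k : ℕ => ((k : ℝ) + 1) * ‖a k‖ ^ 2) {N : ℕ} (hN : 1 ≤ N) (M : ℕ) (θ : ℝ) :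
    ‖partialSum1 a θ N - abelMean1 a θ N‖ ≤
      (M : ℝ) / N * ∑ k ∈ Finset.range M, ‖a k‖ +
        √3 * √(∑' k : ℕ, (((k + M : ℕ) : ℝ) + 1) * ‖a (k + M)‖ ^ 2) := by
  set w := fejerWeight (1 - 1 / N) N
  have hr₀ := one_sub_one_div_natCast_nonneg N
  have hr₁ := one_sub_one_div_natCast_le_one N
  have hw₀ : ∀ k, 0 ≤ w k := fejerWeight_nonneg hr₀ hr₁ N
  have hsum : Summable fun k => w k * ‖a k‖ :=
    (summable_mul_and_tsum_mul_le_sqrt_mul_sqrt (fun k => by positivity) hw₀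
      (fun k => norm_nonneg (a k)) (summable_fejerWeight_sq_div hN) ha).1
  have hhead : ∑ k ∈ Finset.range M, w k * ‖a k‖ ≤ (M : ℝ) / N * ∑ k ∈ Finset.range M, ‖a k‖ := by
    rw [Finset.mul_sum]
    refine Finset.sum_le_sum fun k hk => mul_le_mul_of_nonneg_right ?_ (norm_nonneg _)
    have hk : (k : ℝ) ≤ M := by exact_mod_cast (Finset.mem_range.1 hk).le
    calc w k ≤ k / N := fejerWeight_le_div hN k
      _ ≤ M / N := by gcongr
  have hweights : ∑' k : ℕ, w (k + M) ^ 2 / (((k + M : ℕ) : ℝ) + 1) ≤ 3 :=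
    (tsum_comp_le_tsum_of_inj (summable_fejerWeight_sq_div hN) (fun k => by positivity)
      (add_left_injective M)).trans (tsum_fejerWeight_sq_div_le hN)
  have htail := (summable_mul_and_tsum_mul_le_sqrt_mul_sqrt (fun k => by positivity)
    (fun k => hw₀ (k + M)) (fun k => norm_nonneg (a (k + M)))
    ((summable_nat_add_iff M).2 (summable_fejerWeight_sq_div hN))
    ((summable_nat_add_iff M).2 ha)).2
  calc ‖partialSum1 a θ N - abelMean1 a θ N‖ ≤ ∑' k, w k * ‖a k‖ :=
        norm_partialSum1_sub_abelMean1_le hsum θ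
    _ = ∑ k ∈ Finset.range M, w k * ‖a k‖ + ∑' k, w (k + M) * ‖a (k + M)‖ :=
        (hsum.sum_add_tsum_nat_add M).symm
    _ ≤ _ := add_le_add hhead (htail.trans (by gcongr))

/-- **Lemma (vector-valued Fejér Tauberian lemma).** There is an absolute constant `c > 0`
with `‖S_{N,θ} f − P_{N,θ} f‖ ≤ c ‖f‖_{𝒟(𝔻,H)}` for all `f ∈ 𝒟(𝔻, H)`, `N ≥ 1`, and `θ`;
moreover, for fixed `f`, `S_{N,θ} f − P_{N,θ} f → 0` as `N → ∞`, uniformly in `θ`. -/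
theorem fejer_tauberian (H : Type*) [NormedAddCommGroup H] [InnerProductSpace ℂ H]
    [CompleteSpace H] :
    (∃ c : ℝ, 0 < c ∧
      ∀ (a : ℕ → H), (Summable fun k : ℕ => ((k : ℝ) + 1) * ‖a k‖ ^ 2) →
        ∀ N : ℕ, 1 ≤ N → ∀ θ ∈ Set.Ico (0 : ℝ) (2 * Real.pi),
          ‖partialSum1 a θ N - abelMean1 a θ N‖ ≤
            c * Real.sqrt (∑' k : ℕ, ((k : ℝ) + 1) * ‖a k‖ ^ 2)) ∧
    ∀ (a : ℕ → H), (Summable fun k : ℕ => ((k : ℝ) + 1) * ‖a k‖ ^ 2) →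
      ∀ ε : ℝ, 0 < ε → ∃ N₀ : ℕ, ∀ N : ℕ, N₀ ≤ N → 1 ≤ N →
        ∀ θ ∈ Set.Ico (0 : ℝ) (2 * Real.pi),
          ‖partialSum1 a θ N - abelMean1 a θ N‖ < ε := by
  refine ⟨⟨√3, by positivity, fun a ha N hN θ _ => ?_⟩, fun a ha ε hε => ?_⟩
  · simpa using norm_partialSum1_sub_abelMean1_le_head_add_tail ha hN 0 θ
  · have htail : Tendsto (fun M => √3 * √(∑' k : ℕ, (((k + M : ℕ) : ℝ) + 1) * ‖a (k + M)‖ ^ 2))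
        atTop (nhds 0) := by
      simpa using ((tendsto_sum_nat_add fun k : ℕ => ((k : ℝ) + 1) * ‖a k‖ ^ 2).sqrt).const_mul √3
    obtain ⟨M, hM⟩ := (htail.eventually (gt_mem_nhds (half_pos hε))).exists
    obtain ⟨N₀, hN₀⟩ := eventually_atTop.1 <|
      ((tendsto_const_div_atTop_nhds_zero_nat (M : ℝ)).mul_const (∑ k ∈ Finset.range M, ‖a k‖)
        |>.eventually (gt_mem_nhds (by rw [zero_mul]; exact half_pos hε)))
    refine ⟨N₀, fun N hN hN₁ θ _ => ?_⟩
    linarith [norm_partialSum1_sub_abelMean1_le_head_add_tail ha hN₁ M θ, hN₀ N hN]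
end
end

section
/- Let H be a complex Hilbert space, let (a_α)_{α∈ℕ²} ∈ D(𝔻², H), and let θ ∈ [0,2π)². Suppose the rectangular partial sums S_N(θ) = Σ_{α₁=0}^{N₁} Σ_{α₂=0}^{N₂} a_α e^{i(α₁θ₁+α₂θ₂)} satisfy sup_{N∈ℕ²} ‖S_N(θ)‖_H < ∞ and S_N(θ) → L in H as min(N₁,N₂) → ∞. Then sup_{r₁,r₂∈[0,1)} ‖f_{r₁,r₂}(θ)‖_H < ∞ and f_{r₁,r₂}(θ) → L as (r₁,r₂) → (1,1). -/
open MeasureTheory Filter Complex Set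

noncomputable section

/-- The rectangular partial sum `S_N(θ) = ∑_{α₁=0}^{N₁} ∑_{α₂=0}^{N₂} a_α e^{i(α₁θ₁+α₂θ₂)}`. -/
def rectSum2 {H : Type*} [NormedAddCommGroup H] [NormedSpace ℂ H]
    (a : ℕ × ℕ → H) (θ : ℝ × ℝ) (N : ℕ × ℕ) : H :=
  ∑ α ∈ Finset.range (N.1 + 1) ×ˢ Finset.range (N.2 + 1),
    Complex.exp (Complex.I * ((α.1 : ℂ) * (θ.1 : ℂ) + (α.2 : ℂ) * (θ.2 : ℂ))) • a α

/-- The Abel mean `f_{r₁,r₂}(θ) = ∑_α a_α r₁^{α₁} r₂^{α₂} e^{i(α₁θ₁+α₂θ₂)}`. -/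
def abelMean2 {H : Type*} [NormedAddCommGroup H] [NormedSpace ℂ H]
    (a : ℕ × ℕ → H) (r θ : ℝ × ℝ) : H :=
  ∑' α : ℕ × ℕ, (((r.1 : ℂ) ^ α.1 * (r.2 : ℂ) ^ α.2) *
    Complex.exp (Complex.I * ((α.1 : ℂ) * (θ.1 : ℂ) + (α.2 : ℂ) * (θ.2 : ℂ)))) • a α

/-!
Abel summation by parts in each variable writes the Abel mean as an average of the rectangular
partial sums, `f_r(θ) = ∑_N w_r(N) S_N(θ)` with the product weights
`w_r(N) = (1 - r₁) r₁^{N₁} (1 - r₂) r₂^{N₂}`, which are nonnegative and sum to `1`; this is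
Fubini for the double series `∑_{α ≤ N} w_r(N) a_α e^{i⟨α, θ⟩}`, absolutely convergent because
the Dirichlet condition makes `a` bounded. Uniform boundedness of the `S_N` then bounds `f_r`.
As `r → (1, 1)` the weights of the non-cofinal set `{N | ¬ K ≤ N}` total `1 - r₁^{K₁} r₂^{K₂} → 0`,
so the averages converge to the limit of the `S_N` (a Silverman–Toeplitz argument).
-/

open Topology

theorem norm_le_sqrt_tsum {ι E : Type*} [SeminormedAddCommGroup E] {c : ι → ℝ} {a : ι → E}
    (hc : ∀ i, 1 ≤ c i) (ha : Summable fun i => c i * ‖a i‖ ^ 2) (i : ι) :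
    ‖a i‖ ≤ √(∑' j, c j * ‖a j‖ ^ 2) := by
  have hle : ‖a i‖ ^ 2 ≤ c i * ‖a i‖ ^ 2 := le_mul_of_one_le_left (sq_nonneg _) (hc i)
  have htsum := ha.le_tsum i fun j _ => mul_nonneg (zero_le_one.trans (hc j)) (sq_nonneg _)
  simpa using Real.abs_le_sqrt (hle.trans htsum)

section WeightedAverages

variable {ι κ E : Type*} [NormedAddCommGroup E] [NormedSpace ℝ E]

theorem norm_le_of_hasSum_weighted {w : ι → ℝ} {s : ι → E} {y : E} {M : ℝ}
    (hw0 : ∀ i, 0 ≤ w i) (hw1 : HasSum w 1) (hs : ∀ i, ‖s i‖ ≤ M)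
    (hy : HasSum (fun i => w i • s i) y) : ‖y‖ ≤ M := by
  refine hy.norm_le_of_bounded (by simpa using hw1.mul_left M) fun i => ?_
  rw [norm_smul, Real.norm_of_nonneg (hw0 i), mul_comm]
  exact mul_le_mul_of_nonneg_right (hs i) (hw0 i)

theorem tendsto_of_hasSum_weighted {l : Filter ι} {F : Filter κ} {w : κ → ι → ℝ} {s : ι → E}
    {x : E} {y : κ → E} (hs : Tendsto s l (𝓝 x)) (hbdd : ∃ M, ∀ i, ‖s i‖ ≤ M)
    (hw0 : ∀ᶠ k in F, ∀ i, 0 ≤ w k i) (hw1 : ∀ᶠ k in F, HasSum (w k) 1)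
    (hy : ∀ᶠ k in F, HasSum (fun i => w k i • s i) (y k))
    (htail : ∀ t ∈ l, Tendsto (fun k => ∑' i, tᶜ.indicator (w k) i) F (𝓝 0)) :
    Tendsto y F (𝓝 x) := by
  obtain ⟨M, hM⟩ := hbdd
  obtain ⟨B, hB⟩ : ∃ B, ∀ i, ‖s i - x‖ ≤ B :=
    ⟨M + ‖x‖, fun i => (norm_sub_le _ _).trans (by linarith [hM i])⟩
  rw [Metric.tendsto_nhds]
  intro ε hε
  set t := {i | ‖s i - x‖ ≤ ε / 2}
  have ht : t ∈ l := (Metric.tendsto_nhds.1 hs _ (half_pos hε)).mono fun i hi =>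
    (dist_eq_norm (s i) x ▸ hi).le
  have hsmall : ∀ᶠ k in F, B * ∑' i, tᶜ.indicator (w k) i < ε / 2 := by
    have hlim := (htail t ht).const_mul B
    rw [mul_zero] at hlim
    exact hlim.eventually (gt_mem_nhds (half_pos hε))
  filter_upwards [hw0, hw1, hy, hsmall] with k hw0 hw1 hy hsmall
  have hdiff : HasSum (fun i => w k i • (s i - x)) (y k - x) := by
    simpa [smul_sub] using hy.sub (hw1.smul_const x)
  have hbound : HasSum (fun i => ε / 2 * w k i + B * tᶜ.indicator (w k) i)
      (ε / 2 + B * ∑' i, tᶜ.indicator (w k) i) := by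
    simpa using (hw1.mul_left (ε / 2)).add
      ((hw1.summable.indicator tᶜ).hasSum.mul_left B)
  rw [dist_eq_norm]
  refine (hdiff.norm_le_of_bounded hbound fun i => ?_).trans_lt (by linarith)
  rw [norm_smul, Real.norm_of_nonneg (hw0 i)]
  by_cases hi : i ∈ t
  · rw [indicator_of_notMem (notMem_compl_iff.2 hi), mul_zero, add_zero, mul_comm]
    exact mul_le_mul_of_nonneg_right hi (hw0 i)
  · rw [indicator_of_mem (mem_compl hi), mul_comm B]
    nlinarith [hw0 i, hB i, norm_nonneg (s i - x)]

end WeightedAverages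

section SummationByParts

variable {ι : Type*} [Preorder ι] [LocallyFiniteOrderBot ι]

lemma indicator_Ici_eq_zero_of_notMem_Iic {w : ι → ℝ} {N α : ι} (hα : α ∉ Finset.Iic N) :
    (Ici α).indicator w N = 0 :=
  indicator_of_notMem (by simpa using hα) _

lemma summable_indicator_Ici {w : ι → ℝ} (hw0 : ∀ N, 0 ≤ w N)
    (hw : Summable fun N => (Finset.Iic N).card * w N) :
    Summable fun p : ι × ι => (Ici p.2).indicator w p.1 := by
  refine (summable_prod_of_nonneg fun p => indicator_nonneg (fun N _ => hw0 N) _).2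
    ⟨fun N => summable_of_ne_finset_zero (s := Finset.Iic N) fun α hα =>
      indicator_Ici_eq_zero_of_notMem_Iic hα, hw.congr fun N => ?_⟩
  rw [tsum_eq_sum (s := Finset.Iic N) fun α hα => indicator_Ici_eq_zero_of_notMem_Iic hα,
    Finset.sum_congr rfl fun α hα => indicator_of_mem (mem_Ici.2 (Finset.mem_Iic.1 hα)) w,
    Finset.sum_const, nsmul_eq_mul]

theorem hasSum_smul_sum_Iic {E : Type*} [NormedAddCommGroup E] [NormedSpace ℝ E]
    [CompleteSpace E] {w c : ι → ℝ} {b : ι → E} {C : ℝ} (hw0 : ∀ N, 0 ≤ w N)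
    (hc : ∀ α, HasSum ((Ici α).indicator w) (c α))
    (hw : Summable fun N => (Finset.Iic N).card * w N) (hb : ∀ α, ‖b α‖ ≤ C) :
    HasSum (fun N => w N • ∑ α ∈ Finset.Iic N, b α) (∑' α, c α • b α) := by
  set T : ι × ι → E := fun p => (Ici p.2).indicator w p.1 • b p.2
  have hT : Summable T := by
    refine Summable.of_norm_bounded ((summable_indicator_Ici hw0 hw).mul_left (max C 0))
      fun p => ?_
    have hind := indicator_nonneg (fun N _ => hw0 N) p.1 (s := Ici p.2)
    rw [norm_smul, Real.norm_of_nonneg hind, mul_comm]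
    exact mul_le_mul_of_nonneg_right ((hb p.2).trans (le_max_left _ _)) hind
  have hrow : ∀ N, HasSum (fun α => T (N, α)) (w N • ∑ α ∈ Finset.Iic N, b α) := by
    intro N
    have hfin : HasSum (fun α => T (N, α)) (∑ α ∈ Finset.Iic N, T (N, α)) :=
      hasSum_sum_of_ne_finset_zero fun α hα => by simp [T, indicator_Ici_eq_zero_of_notMem_Iic hα]
    rwa [Finset.sum_congr rfl fun α hα => (by
      simp only [T, indicator_of_mem (mem_Ici.2 (Finset.mem_Iic.1 hα)) w] : T (N, α) = w N • b α),
      ← Finset.smul_sum] at hfin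
  have hcol : HasSum (fun α => c α • b α) (∑' p, T p) :=
    ((Equiv.prodComm ι ι).hasSum_iff.2 hT.hasSum).prod_fiberwise
      fun α => (hc α).smul_const (b α)
  rw [hcol.tsum_eq]
  exact hT.hasSum.prod_fiberwise hrow

end SummationByParts

section GeomWeight

def geomWeight (r : ℝ) (n : ℕ) : ℝ := (1 - r) * r ^ n

variable {r : ℝ}

lemma geomWeight_nonneg (h0 : 0 ≤ r) (h1 : r ≤ 1) (n : ℕ) : 0 ≤ geomWeight r n :=
  mul_nonneg (sub_nonneg.2 h1) (pow_nonneg h0 n)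

lemma hasSum_indicator_Ici_geomWeight (h0 : 0 ≤ r) (h1 : r < 1) (m : ℕ) :
    HasSum ((Ici m).indicator (geomWeight r)) (r ^ m) := by
  rw [← hasSum_nat_add_iff' m, Finset.sum_eq_zero fun i hi =>
    indicator_of_notMem (by simpa using hi) _, sub_zero]
  have hshift : (fun n => (Ici m).indicator (geomWeight r) (n + m)) =
      fun n => (1 - r) * r ^ m * r ^ n := funext fun n => by
    rw [indicator_of_mem (mem_Ici.2 (Nat.le_add_left m n)), geomWeight, pow_add]
    ring
  have hgeom := (hasSum_geometric_of_lt_one h0 h1).mul_left ((1 - r) * r ^ m)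
  rwa [← hshift, ← div_eq_mul_inv,
    mul_div_cancel_left₀ _ (sub_pos.2 h1).ne'] at hgeom

lemma summable_succ_mul_geomWeight (h0 : 0 ≤ r) (h1 : r < 1) :
    Summable fun n : ℕ => ((n : ℝ) + 1) * geomWeight r n := by
  have hr : ‖r‖ < 1 := by rwa [Real.norm_of_nonneg h0]
  refine (((summable_pow_mul_geometric_of_norm_lt_one 1 hr).add
    (summable_geometric_of_lt_one h0 h1)).mul_left (1 - r)).congr fun n => ?_
  simp only [geomWeight, pow_one]
  ring

end GeomWeight

section AbelWeight

def abelWeight (r : ℝ × ℝ) (N : ℕ × ℕ) : ℝ := geomWeight r.1 N.1 * geomWeight r.2 N.2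

variable {r : ℝ × ℝ}

lemma abelWeight_nonneg (hr : r ∈ Ico (0 : ℝ) 1 ×ˢ Ico (0 : ℝ) 1) (N : ℕ × ℕ) :
    0 ≤ abelWeight r N :=
  mul_nonneg (geomWeight_nonneg hr.1.1 hr.1.2.le _) (geomWeight_nonneg hr.2.1 hr.2.2.le _)

lemma hasSum_indicator_Ici_abelWeight (hr : r ∈ Ico (0 : ℝ) 1 ×ˢ Ico (0 : ℝ) 1)
    (α : ℕ × ℕ) :
    HasSum ((Ici α).indicator (abelWeight r)) (r.1 ^ α.1 * r.2 ^ α.2) := by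
  have h1 := hasSum_indicator_Ici_geomWeight hr.1.1 hr.1.2 α.1
  have h2 := hasSum_indicator_Ici_geomWeight hr.2.1 hr.2.2 α.2
  have hprod : (Ici α).indicator (abelWeight r) = fun N =>
      (Ici α.1).indicator (geomWeight r.1) N.1 * (Ici α.2).indicator (geomWeight r.2) N.2 := by
    ext N
    simp only [indicator_apply, mem_Ici, Prod.le_def, abelWeight]
    split_ifs <;> simp_all
  rw [hprod]
  refine h1.mul h2 (h1.summable.mul_of_nonneg h2.summable ?_ ?_)
  · exact indicator_nonneg fun n _ => geomWeight_nonneg hr.1.1 hr.1.2.le n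
  · exact indicator_nonneg fun n _ => geomWeight_nonneg hr.2.1 hr.2.2.le n

lemma hasSum_abelWeight (hr : r ∈ Ico (0 : ℝ) 1 ×ˢ Ico (0 : ℝ) 1) :
    HasSum (abelWeight r) 1 := by
  simpa using hasSum_indicator_Ici_abelWeight hr 0

lemma summable_card_Iic_mul_abelWeight (hr : r ∈ Ico (0 : ℝ) 1 ×ˢ Ico (0 : ℝ) 1) :
    Summable fun N : ℕ × ℕ => (Finset.Iic N).card * abelWeight r N := by
  refine ((summable_succ_mul_geomWeight hr.1.1 hr.1.2).mul_of_nonneg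
    (summable_succ_mul_geomWeight hr.2.1 hr.2.2) ?_ ?_).congr fun N => ?_
  · exact fun n => mul_nonneg (by positivity) (geomWeight_nonneg hr.1.1 hr.1.2.le n)
  · exact fun n => mul_nonneg (by positivity) (geomWeight_nonneg hr.2.1 hr.2.2.le n)
  · simp only [Finset.Iic_prod_def, Finset.card_product, Nat.card_Iic, abelWeight]
    push_cast
    ring

lemma tendsto_tsum_compl_indicator_abelWeight {t : Set (ℕ × ℕ)} (ht : t ∈ atTop) :
    Tendsto (fun r => ∑' N, tᶜ.indicator (abelWeight r) N)
      (𝓝[Ico (0 : ℝ) 1 ×ˢ Ico (0 : ℝ) 1] (1, 1)) (𝓝 0) := by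
  obtain ⟨K, hK⟩ := mem_atTop_sets.1 ht
  have hlim : Tendsto (fun r : ℝ × ℝ => 1 - r.1 ^ K.1 * r.2 ^ K.2)
      (𝓝[Ico (0 : ℝ) 1 ×ˢ Ico (0 : ℝ) 1] (1, 1)) (𝓝 0) := by
    have hcont : Continuous fun r : ℝ × ℝ => 1 - r.1 ^ K.1 * r.2 ^ K.2 := by fun_prop
    simpa using (hcont.tendsto (1, 1)).mono_left nhdsWithin_le_nhds
  refine tendsto_of_tendsto_of_tendsto_of_le_of_le' tendsto_const_nhds hlim ?_ ?_
  · filter_upwards [self_mem_nhdsWithin] with r hr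
    exact tsum_nonneg (indicator_nonneg fun N _ => abelWeight_nonneg hr N)
  · filter_upwards [self_mem_nhdsWithin] with r hr
    have hcompl : HasSum ((Ici K)ᶜ.indicator (abelWeight r)) (1 - r.1 ^ K.1 * r.2 ^ K.2) := by
      rw [indicator_compl]
      exact (hasSum_abelWeight hr).sub (hasSum_indicator_Ici_abelWeight hr K)
    rw [← hcompl.tsum_eq]
    exact Summable.tsum_le_tsum
      (indicator_le_indicator_of_subset (compl_subset_compl.2 fun N hN => hK N hN)
        (abelWeight_nonneg hr))
      ((hasSum_abelWeight hr).summable.indicator _) hcompl.summable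

end AbelWeight

theorem hasSum_abelWeight_smul_rectSum2 {H : Type*} [NormedAddCommGroup H] [NormedSpace ℂ H]
    [CompleteSpace H] (a : ℕ × ℕ → H) {C : ℝ} (ha : ∀ α, ‖a α‖ ≤ C) (θ : ℝ × ℝ) {r : ℝ × ℝ}
    (hr : r ∈ Ico (0 : ℝ) 1 ×ˢ Ico (0 : ℝ) 1) :
    HasSum (fun N => abelWeight r N • rectSum2 a θ N) (abelMean2 a r θ) := by
  set e : ℕ × ℕ → ℂ := fun α => exp (I * ((α.1 : ℂ) * (θ.1 : ℂ) + (α.2 : ℂ) * (θ.2 : ℂ)))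
  have hsum := hasSum_smul_sum_Iic (b := fun α => e α • a α) (abelWeight_nonneg hr)
    (hasSum_indicator_Ici_abelWeight hr) (summable_card_Iic_mul_abelWeight hr)
    fun α => by simpa [e, norm_smul, norm_exp] using ha α
  convert hsum using 1
  · funext N
    simp only [rectSum2, Finset.Iic_prod_def, Nat.range_succ_eq_Iic, e]
  · refine tsum_congr fun α => ?_
    rw [← Complex.coe_smul, smul_smul]
    push_cast
    rfl

theorem pringsheim_implies_abel_general (H : Type*) [NormedAddCommGroup H]
    [InnerProductSpace ℂ H] [CompleteSpace H]
    (a : ℕ × ℕ → H)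
    (hf : Summable fun α : ℕ × ℕ => ((α.1 : ℝ) + 1) * ((α.2 : ℝ) + 1) * ‖a α‖ ^ 2)
    (θ : ℝ × ℝ)
    (L : H)
    (hbdd : ∃ M : ℝ, ∀ N : ℕ × ℕ, ‖rectSum2 a θ N‖ ≤ M)
    (hconv : Filter.Tendsto (rectSum2 a θ) Filter.atTop (nhds L)) :
    (∃ M : ℝ, ∀ r ∈ Set.Ico (0 : ℝ) 1 ×ˢ Set.Ico (0 : ℝ) 1, ‖abelMean2 a r θ‖ ≤ M) ∧
    Filter.Tendsto (fun r : ℝ × ℝ => abelMean2 a r θ)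
      (nhdsWithin (1, 1) (Set.Ico (0 : ℝ) 1 ×ˢ Set.Ico (0 : ℝ) 1)) (nhds L) := by
  have ha := norm_le_sqrt_tsum (fun α : ℕ × ℕ => one_le_mul_of_one_le_of_one_le
    (by simp : (1 : ℝ) ≤ α.1 + 1) (by simp : (1 : ℝ) ≤ α.2 + 1)) hf
  have hrep : ∀ r ∈ Ico (0 : ℝ) 1 ×ˢ Ico (0 : ℝ) 1,
      HasSum (fun N => abelWeight r N • rectSum2 a θ N) (abelMean2 a r θ) :=
    fun r hr => hasSum_abelWeight_smul_rectSum2 a ha θ hr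
  obtain ⟨M, hM⟩ := hbdd
  refine ⟨⟨M, fun r hr => norm_le_of_hasSum_weighted (abelWeight_nonneg hr)
    (hasSum_abelWeight hr) hM (hrep r hr)⟩, ?_⟩
  exact tendsto_of_hasSum_weighted hconv ⟨M, hM⟩
    (eventually_nhdsWithin_of_forall fun r hr => abelWeight_nonneg hr)
    (eventually_nhdsWithin_of_forall fun r hr => hasSum_abelWeight hr)
    (eventually_nhdsWithin_of_forall hrep) fun t ht => tendsto_tsum_compl_indicator_abelWeight ht

/-- **Lemma (bi-parameter Abel summation).** If `f ∈ 𝒟(𝔻², H)` and the rectangular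
partial sums at `θ` are uniformly bounded and converge to `L` as `min(N₁,N₂) → ∞`, then
the Abel means `f_{r₁,r₂}(θ)` are uniformly bounded and converge to `L` as `(r₁,r₂) → (1,1)`. -/
theorem pringsheim_implies_abel (H : Type*) [NormedAddCommGroup H]
    [InnerProductSpace ℂ H] [CompleteSpace H]
    (a : ℕ × ℕ → H)
    (hf : Summable fun α : ℕ × ℕ => ((α.1 : ℝ) + 1) * ((α.2 : ℝ) + 1) * ‖a α‖ ^ 2)
    (θ : ℝ × ℝ) (hθ₁ : θ.1 ∈ Set.Ico 0 (2 * Real.pi)) (hθ₂ : θ.2 ∈ Set.Ico 0 (2 * Real.pi))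
    (L : H)
    (hbdd : ∃ M : ℝ, ∀ N : ℕ × ℕ, ‖rectSum2 a θ N‖ ≤ M)
    (hconv : Filter.Tendsto (rectSum2 a θ) Filter.atTop (nhds L)) :
    (∃ M : ℝ, ∀ r ∈ Set.Ico (0 : ℝ) 1 ×ˢ Set.Ico (0 : ℝ) 1, ‖abelMean2 a r θ‖ ≤ M) ∧
    Filter.Tendsto (fun r : ℝ × ℝ => abelMean2 a r θ)
      (nhdsWithin (1, 1) (Set.Ico (0 : ℝ) 1 ×ˢ Set.Ico (0 : ℝ) 1)) (nhds L) :=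
  pringsheim_implies_abel_general H a hf θ L hbdd hconv
end
end

section
/- Let H be a complex Hilbert space. For θ ∈ [0,2π) and h ∈ (0,1), define R_{h,θ} f = Σ_{k=0}^{∞} a_k (sin(kh)/(kh)) e^{ikθ} (with the convention sin(0·h)/(0·h) = 1) and S_{N,θ} f = Σ_{k=0}^{N} a_k e^{ikθ}, for f ∈ D(𝔻, H). Then there is an absolute constant c > 0 such that whenever N ≥ 1 and 1/(N+1) ≤ h < 1/N, one has ‖R_{h,θ} f − S_{N,θ} f‖_H ≤ c ‖f‖_{D(𝔻,H)}; moreover, for each fixed f ∈ D(𝔻, H), sup{ ‖R_{h,θ} f − S_{N,θ} f‖_H : θ ∈ [0,2π), 1/(N+1) ≤ h < 1/N } → 0 as N → ∞. -/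
/-!
Write `R_{h,θ} f - S_{N,θ} f = ∑ₖ dₖ e^{ikθ} aₖ` with `dₖ = sinc(kh) - [k ≤ N]`. For `k ≤ N` one has
`|dₖ| ≤ (kh)²/6`, and for `k > N` one has `|dₖ| ≤ 1/(kh) ≤ (N+1)/k`, so on the window
`1/(N+1) ≤ h < 1/N` the weight `∑ₖ dₖ²/(k+1)` is at most `(N+1)h + ∑_{k>N} (N+1)/(k(k+1)) ≤ 3`.
Cauchy–Schwarz against `∑ₖ (k+1)‖aₖ‖²` then gives the bound `√3 ‖f‖`, and the same estimate applied
to the coefficients `k ≥ M` only, together with `|dₖ| ≤ kh ≤ M/N` for `k < M`, gives the decay in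
`N`.
-/

open MeasureTheory Filter Complex Set

noncomputable section

/-- The normalized sinc factor `sin(kh)/(kh)`, with value `1` for `k = 0`. -/
def sincFactor (k : ℕ) (h : ℝ) : ℝ :=
  if k = 0 then 1 else Real.sin (k * h) / (k * h)

/-- The averaging operator `R_{h,θ} f = ∑_{k=0}^{∞} a_k (sin(kh)/(kh)) e^{ikθ}`. -/
def sincMean1 {H : Type*} [NormedAddCommGroup H] [NormedSpace ℂ H]
    (a : ℕ → H) (θ h : ℝ) : H :=
  ∑' k : ℕ, (((sincFactor k h : ℝ) : ℂ) * Complex.exp (Complex.I * k * θ)) • a k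

namespace Real

lemma abs_sinc_le_inv_abs {x : ℝ} (hx : x ≠ 0) : |sinc x| ≤ |x|⁻¹ := by
  rw [sinc_of_ne_zero hx, abs_div, div_eq_mul_inv]
  exact mul_le_of_le_one_left (by positivity) (abs_sin_le_one x)

lemma one_sub_sinc_le_of_nonneg {x : ℝ} (hx : 0 ≤ x) : 1 - sinc x ≤ x ^ 2 / 6 := by
  rcases hx.eq_or_lt with rfl | hx
  · simp
  · rw [sinc_of_ne_zero hx.ne', sub_le_comm, le_div_iff₀ hx]
    linarith [sin_ge_sub_cube hx.le]

lemma abs_one_sub_sinc_le (x : ℝ) : |1 - sinc x| ≤ x ^ 2 / 6 := by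
  rw [abs_of_nonneg (sub_nonneg.2 (sinc_le_one x))]
  rcases le_total 0 x with hx | hx
  · exact one_sub_sinc_le_of_nonneg hx
  · simpa [sinc_neg] using one_sub_sinc_le_of_nonneg (neg_nonneg.2 hx)

lemma summable_and_tsum_sqrt_mul_sqrt_le {ι : Type*} {f g : ι → ℝ} (hf : ∀ i, 0 ≤ f i)
    (hg : ∀ i, 0 ≤ g i) (hf_sum : Summable f) (hg_sum : Summable g) :
    Summable (fun i => √(f i) * √(g i)) ∧ ∑' i, √(f i) * √(g i) ≤ √(∑' i, f i) * √(∑' i, g i) := by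
  have hsum : Summable fun i => √(f i) * √(g i) := by
    refine .of_nonneg_of_le (fun i => by positivity) (fun i => ?_) ((hf_sum.add hg_sum).div_const 2)
    nlinarith [sq_nonneg (√(f i) - √(g i)), sq_sqrt (hf i), sq_sqrt (hg i)]
  refine ⟨hsum, hsum.tsum_le_of_sum_le fun s => ?_⟩
  calc ∑ i ∈ s, √(f i) * √(g i) ≤ √(∑ i ∈ s, f i) * √(∑ i ∈ s, g i) :=
        sum_sqrt_mul_sqrt_le s hf hg
    _ ≤ √(∑' i, f i) * √(∑' i, g i) := by
        gcongr
        · exact hf_sum.sum_le_tsum s fun i _ => hf i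
        · exact hg_sum.sum_le_tsum s fun i _ => hg i

end Real

lemma summable_and_tsum_abs_mul_norm_le {ι E : Type*} [SeminormedAddGroup E] {x w : ι → ℝ}
    {y : ι → E} (hw : ∀ i, 0 < w i) (hx : Summable fun i => x i ^ 2 / w i)
    (hy : Summable fun i => w i * ‖y i‖ ^ 2) :
    Summable (fun i => |x i| * ‖y i‖) ∧
      ∑' i, |x i| * ‖y i‖ ≤ √(∑' i, x i ^ 2 / w i) * √(∑' i, w i * ‖y i‖ ^ 2) := by
  have hxy : ∀ i, √(x i ^ 2 / w i) * √(w i * ‖y i‖ ^ 2) = |x i| * ‖y i‖ := fun i => by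
    have hw0 := hw i
    rw [← Real.sqrt_mul (by positivity), ← Real.sqrt_sq (by positivity : 0 ≤ |x i| * ‖y i‖)]
    congr 1
    field_simp
    rw [sq_abs, mul_comm]
  simpa only [hxy] using Real.summable_and_tsum_sqrt_mul_sqrt_le
    (fun i => by have := hw i; positivity) (fun i => by have := hw i; positivity) hx hy

lemma hasSum_sub_succ_of_antitone {f : ℕ → ℝ} {l : ℝ} (hf : Antitone f)
    (hl : Tendsto f atTop (nhds l)) : HasSum (fun n => f n - f (n + 1)) (f 0 - l) := by
  refine (hasSum_iff_tendsto_nat_of_nonneg (fun n => sub_nonneg.2 (hf n.le_succ)) _).2 ?_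
  simpa only [Finset.sum_range_sub'] using tendsto_const_nhds.sub hl

lemma sincFactor_eq_sinc (k : ℕ) {h : ℝ} (hh : h ≠ 0) : sincFactor k h = Real.sinc (k * h) := by
  rcases eq_or_ne k 0 with rfl | hk
  · simp [sincFactor]
  · rw [sincFactor, if_neg hk, Real.sinc_of_ne_zero (by positivity)]

/-- The coefficient of `a k` in `R_{h,θ} f - S_{N,θ} f`, up to the unimodular factor `e^{ikθ}`. -/
def sincDefect (N : ℕ) (h : ℝ) (k : ℕ) : ℝ :=
  sincFactor k h - if k ≤ N then 1 else 0

section sincDefect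

variable {N k : ℕ} {h : ℝ}

lemma abs_sincDefect_le_of_le (hh : 0 < h) (hk : k ≤ N) :
    |sincDefect N h k| ≤ (k * h) ^ 2 / 6 := by
  rw [sincDefect, if_pos hk, sincFactor_eq_sinc k hh.ne', abs_sub_comm]
  exact Real.abs_one_sub_sinc_le _

lemma abs_sincDefect_le_of_lt (hh : 0 < h) (hk : N < k) :
    |sincDefect N h k| ≤ (k * h)⁻¹ := by
  have hkh : 0 < (k : ℝ) * h := mul_pos (by exact_mod_cast (Nat.zero_le N).trans_lt hk) hh
  rw [sincDefect, if_neg hk.not_ge, sub_zero, sincFactor_eq_sinc k hh.ne']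
  simpa only [abs_of_pos hkh] using Real.abs_sinc_le_inv_abs hkh.ne'

lemma abs_sincDefect_le_mul (hh : 0 < h) (hNh : N * h ≤ 1) (hNh' : 1 ≤ (N + 1) * h) :
    |sincDefect N h k| ≤ k * h := by
  rcases le_or_gt k N with hk | hk
  · have hkh : (k : ℝ) * h ≤ 1 := le_trans (by gcongr) hNh
    have := abs_sincDefect_le_of_le hh hk
    nlinarith [mul_nonneg (Nat.cast_nonneg k) hh.le]
  · have hkh : 1 ≤ (k : ℝ) * h := le_trans hNh' (by gcongr; exact_mod_cast hk)
    exact (abs_sincDefect_le_of_lt hh hk).trans ((inv_le_one_of_one_le₀ hkh).trans hkh)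

lemma sincDefect_sq_div_le_of_le (hh : 0 < h) (hNh : N * h ≤ 1) (hk : k ≤ N) :
    sincDefect N h k ^ 2 / (k + 1) ≤ h := by
  have hkh : (k : ℝ) * h ≤ 1 := le_trans (by gcongr) hNh
  have hkh0 : 0 ≤ (k : ℝ) * h := by positivity
  have hd := abs_sincDefect_le_of_le hh hk
  rw [div_le_iff₀ (by positivity), ← sq_abs]
  calc |sincDefect N h k| ^ 2 ≤ ((k * h) ^ 2 / 6) ^ 2 := by gcongr
    _ ≤ k * h := by nlinarith [pow_le_one₀ hkh0 hkh (n := 3)]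
    _ ≤ h * (k + 1) := by nlinarith

lemma sincDefect_sq_div_le_of_lt (hh : 0 < h) (hNh' : 1 ≤ (N + 1) * h) (hk : N < k) :
    sincDefect N h k ^ 2 / (k + 1) ≤ (N + 1) / k - (N + 1) / (k + 1) := by
  have hk' : (N : ℝ) + 1 ≤ k := by exact_mod_cast hk
  have hk0 : (0 : ℝ) < k := by linarith
  have hd : |sincDefect N h k| ≤ (N + 1) / k := by
    refine (abs_sincDefect_le_of_lt hh hk).trans ?_
    rw [inv_le_comm₀ (by positivity) (by positivity), inv_div, div_le_iff₀ (by positivity)]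
    nlinarith
  have hd1 : |sincDefect N h k| ≤ 1 := hd.trans ((div_le_one (by positivity)).2 hk')
  have hsq : sincDefect N h k ^ 2 ≤ (N + 1) / k := by
    rw [← sq_abs]; nlinarith [abs_nonneg (sincDefect N h k)]
  calc sincDefect N h k ^ 2 / (k + 1) ≤ (N + 1) / k / (k + 1) := by gcongr
    _ = (N + 1) / k - (N + 1) / (k + 1) := by field_simp; ring

lemma summable_and_tsum_sincDefect_sq_div_le (hh : 0 < h) (hNh : N * h ≤ 1)
    (hNh' : 1 ≤ (N + 1) * h) (hh1 : h ≤ 1) :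
    Summable (fun k : ℕ => sincDefect N h k ^ 2 / (k + 1)) ∧
      ∑' k : ℕ, sincDefect N h k ^ 2 / (k + 1) ≤ 3 := by
  set w := fun k : ℕ => sincDefect N h k ^ 2 / ((k : ℝ) + 1)
  set g := fun j : ℕ => ((N : ℝ) + 1) / (j + (N + 1))
  have hg : HasSum (fun j => g j - g (j + 1)) 1 := by
    have hanti : Antitone g := fun i j hij => by dsimp only [g]; gcongr
    have hlim : Tendsto g atTop (nhds 0) :=
      tendsto_const_nhds.div_atTop (tendsto_atTop_add_const_right _ _ tendsto_natCast_atTop_atTop)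
    simpa [g, div_self (Nat.cast_add_one_pos (α := ℝ) N).ne'] using
      hasSum_sub_succ_of_antitone hanti hlim
  have htail : ∀ j, w (j + (N + 1)) ≤ g j - g (j + 1) := fun j => by
    have := sincDefect_sq_div_le_of_lt hh hNh' (k := j + (N + 1)) (by omega)
    simp only [w, g]
    push_cast at this ⊢
    convert this using 3; ring
  have htail_sum : Summable fun j => w (j + (N + 1)) :=
    .of_nonneg_of_le (fun j => by positivity) htail hg.summable
  have hsum : Summable w := (summable_nat_add_iff (N + 1)).1 htail_sum
  refine ⟨hsum, ?_⟩
  rw [← hsum.sum_add_tsum_nat_add (N + 1)]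
  have hhead : ∑ k ∈ Finset.range (N + 1), w k ≤ (N + 1) * h := by
    simpa using Finset.sum_le_card_nsmul _ w h fun k hk =>
      sincDefect_sq_div_le_of_le hh hNh (Nat.lt_succ_iff.1 (Finset.mem_range.1 hk))
  have htail_le : ∑' j, w (j + (N + 1)) ≤ 1 := hg.tsum_eq ▸ htail_sum.tsum_le_tsum htail hg.summable
  nlinarith

end sincDefect

section norm

variable {H : Type*} [NormedAddCommGroup H] [NormedSpace ℂ H]

lemma norm_ofReal_mul_exp_smul (r θ : ℝ) (k : ℕ) (x : H) :
    ‖((r : ℂ) * Complex.exp (Complex.I * k * θ)) • x‖ = |r| * ‖x‖ := by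
  have he : ‖Complex.exp (Complex.I * k * θ)‖ = 1 := by simp [Complex.norm_exp]
  rw [norm_smul, norm_mul, he, mul_one, Complex.norm_real, Real.norm_eq_abs]

lemma hasSum_sincMean1_sub_partialSum1 [CompleteSpace H] (a : ℕ → H) (θ : ℝ) {N : ℕ} {h : ℝ}
    (hsum : Summable fun k => |sincDefect N h k| * ‖a k‖) :
    HasSum (fun k => ((sincDefect N h k : ℂ) * Complex.exp (Complex.I * k * θ)) • a k)
      (sincMean1 a θ h - partialSum1 a θ N) := by
  set D := fun k : ℕ => ((sincDefect N h k : ℂ) * Complex.exp (Complex.I * k * θ)) • a k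
  set S := fun k : ℕ => (((if k ≤ N then 1 else 0 : ℝ) : ℂ) * Complex.exp (Complex.I * k * θ)) • a k
  have hD : Summable D := .of_norm <| by
    simpa only [D, norm_ofReal_mul_exp_smul] using hsum
  have hS : HasSum S (partialSum1 a θ N) := by
    have hSN : partialSum1 a θ N = ∑ k ∈ Finset.range (N + 1), S k :=
      Finset.sum_congr rfl fun k hk => by
        simp [S, Nat.lt_succ_iff.1 (Finset.mem_range.1 hk)]
    rw [hSN]
    exact hasSum_sum_of_ne_finset_zero fun k hk => by
      simp [S, Nat.lt_succ_iff.not.1 (Finset.mem_range.not.1 hk)]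
  have hDS : (fun k => D k + S k) = fun k =>
      (((sincFactor k h : ℝ) : ℂ) * Complex.exp (Complex.I * k * θ)) • a k := by
    ext k
    simp only [D, S, sincDefect, ← add_smul, ← add_mul, ← Complex.ofReal_add, sub_add_cancel]
  have hR : HasSum (fun k => D k + S k) (sincMean1 a θ h) := by
    rw [hDS]
    exact (hDS ▸ hD.add hS.summable).hasSum
  simpa using hR.sub hS

lemma norm_sincMean1_sub_partialSum1_le_tsum [CompleteSpace H] (a : ℕ → H) (θ : ℝ) {N : ℕ}
    {h : ℝ} (hsum : Summable fun k => |sincDefect N h k| * ‖a k‖) :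
    ‖sincMean1 a θ h - partialSum1 a θ N‖ ≤ ∑' k, |sincDefect N h k| * ‖a k‖ := by
  rw [← (hasSum_sincMean1_sub_partialSum1 a θ hsum).tsum_eq]
  have hnorm : Summable fun k =>
      ‖((sincDefect N h k : ℂ) * Complex.exp (Complex.I * k * θ)) • a k‖ := by
    simpa only [norm_ofReal_mul_exp_smul] using hsum
  simpa only [norm_ofReal_mul_exp_smul] using norm_tsum_le_tsum_norm hnorm

end norm

section window

variable {N : ℕ} {h : ℝ}

lemma mul_bounds_of_mem_Ico_one_div (hN : 1 ≤ N) (hh : h ∈ Ico (1 / ((N : ℝ) + 1)) (1 / N)) :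
    0 < h ∧ N * h ≤ 1 ∧ 1 ≤ (N + 1) * h ∧ h ≤ 1 := by
  have hN0 : (1 : ℝ) ≤ N := by exact_mod_cast hN
  obtain ⟨h1, h2⟩ := hh
  rw [div_le_iff₀' (by positivity)] at h1
  rw [lt_div_iff₀' (by positivity)] at h2
  refine ⟨by nlinarith, h2.le, h1, by nlinarith⟩

lemma sum_range_abs_sincDefect_mul_norm_le {E : Type*} [SeminormedAddGroup E] (hN : 1 ≤ N)
    (hh : h ∈ Ico (1 / ((N : ℝ) + 1)) (1 / N)) (a : ℕ → E) (M : ℕ) :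
    ∑ k ∈ Finset.range M, |sincDefect N h k| * ‖a k‖ ≤ M * (∑ k ∈ Finset.range M, ‖a k‖) / N := by
  obtain ⟨hh0, hNh, hNh', -⟩ := mul_bounds_of_mem_Ico_one_div hN hh
  have hd : ∀ k ∈ Finset.range M, |sincDefect N h k| ≤ M / N := fun k hk =>
    calc |sincDefect N h k| ≤ k * h := abs_sincDefect_le_mul hh0 hNh hNh'
      _ ≤ M * (1 / N) := by gcongr; exacts [(Finset.mem_range.1 hk).le, hh.2.le]
      _ = M / N := mul_one_div _ _
  calc ∑ k ∈ Finset.range M, |sincDefect N h k| * ‖a k‖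
      ≤ ∑ k ∈ Finset.range M, M / N * ‖a k‖ :=
        Finset.sum_le_sum fun k hk => by gcongr; exact hd k hk
    _ = M * (∑ k ∈ Finset.range M, ‖a k‖) / N := by rw [← Finset.mul_sum]; ring

lemma norm_sincMean1_sub_partialSum1_le {H : Type*} [NormedAddCommGroup H] [NormedSpace ℂ H]
    [CompleteSpace H] (hN : 1 ≤ N) (hh : h ∈ Ico (1 / ((N : ℝ) + 1)) (1 / N)) (a : ℕ → H)
    (ha : Summable fun k : ℕ => ((k : ℝ) + 1) * ‖a k‖ ^ 2) (θ : ℝ) (M : ℕ) :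
    ‖sincMean1 a θ h - partialSum1 a θ N‖ ≤ ∑ k ∈ Finset.range M, |sincDefect N h k| * ‖a k‖ +
      √3 * √(∑' j, (((j + M : ℕ) : ℝ) + 1) * ‖a (j + M)‖ ^ 2) := by
  obtain ⟨hh0, hNh, hNh', hh1⟩ := mul_bounds_of_mem_Ico_one_div hN hh
  obtain ⟨hw, hw3⟩ := summable_and_tsum_sincDefect_sq_div_le hh0 hNh hNh' hh1
  have hw_shift : Summable fun j => sincDefect N h (j + M) ^ 2 / (((j + M : ℕ) : ℝ) + 1) :=
    (summable_nat_add_iff (f := fun k : ℕ => sincDefect N h k ^ 2 / ((k : ℝ) + 1)) M).2 hw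
  have ha_shift : Summable fun j => (((j + M : ℕ) : ℝ) + 1) * ‖a (j + M)‖ ^ 2 :=
    (summable_nat_add_iff (f := fun k : ℕ => ((k : ℝ) + 1) * ‖a k‖ ^ 2) M).2 ha
  obtain ⟨hcs, hcs_le⟩ := summable_and_tsum_abs_mul_norm_le
    (fun j => Nat.cast_add_one_pos (j + M)) hw_shift ha_shift
  have hw_shift_le : ∑' j, sincDefect N h (j + M) ^ 2 / (((j + M : ℕ) : ℝ) + 1) ≤ 3 := by
    have := hw.sum_add_tsum_nat_add M
    have : 0 ≤ ∑ k ∈ Finset.range M, sincDefect N h k ^ 2 / ((k : ℝ) + 1) :=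
      Finset.sum_nonneg fun k _ => by positivity
    linarith
  have hsum := (summable_nat_add_iff (f := fun k => |sincDefect N h k| * ‖a k‖) M).1 hcs
  calc ‖sincMean1 a θ h - partialSum1 a θ N‖ ≤ ∑' k, |sincDefect N h k| * ‖a k‖ :=
        norm_sincMean1_sub_partialSum1_le_tsum a θ hsum
    _ = ∑ k ∈ Finset.range M, |sincDefect N h k| * ‖a k‖ +
          ∑' j, |sincDefect N h (j + M)| * ‖a (j + M)‖ := (hsum.sum_add_tsum_nat_add M).symm
    _ ≤ _ := by
        gcongr
        exact hcs_le.trans (by gcongr)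

end window

/-- **Lemma (comparison of averages with partial sums).** There is an absolute constant
`c > 0` such that `‖R_{h,θ} f − S_{N,θ} f‖ ≤ c ‖f‖_{𝒟(𝔻,H)}` whenever `N ≥ 1` and
`1/(N+1) ≤ h < 1/N`; and for each fixed `f`, the supremum of `‖R_{h,θ} f − S_{N,θ} f‖`
over all such `h` and all `θ` tends to `0` as `N → ∞`. -/
theorem sinc_mean_comparison (H : Type*) [NormedAddCommGroup H] [InnerProductSpace ℂ H]
    [CompleteSpace H] :
    (∃ c : ℝ, 0 < c ∧
      ∀ (a : ℕ → H), (Summable fun k : ℕ => ((k : ℝ) + 1) * ‖a k‖ ^ 2) →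
        ∀ N : ℕ, 1 ≤ N → ∀ h : ℝ, 1 / ((N : ℝ) + 1) ≤ h → h < 1 / (N : ℝ) →
          ∀ θ ∈ Set.Ico (0 : ℝ) (2 * Real.pi),
            ‖sincMean1 a θ h - partialSum1 a θ N‖ ≤
              c * Real.sqrt (∑' k : ℕ, ((k : ℝ) + 1) * ‖a k‖ ^ 2)) ∧
    ∀ (a : ℕ → H), (Summable fun k : ℕ => ((k : ℝ) + 1) * ‖a k‖ ^ 2) →
      ∀ ε : ℝ, 0 < ε → ∃ N₀ : ℕ, ∀ N : ℕ, N₀ ≤ N → 1 ≤ N →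
        ∀ h : ℝ, 1 / ((N : ℝ) + 1) ≤ h → h < 1 / (N : ℝ) →
          ∀ θ ∈ Set.Ico (0 : ℝ) (2 * Real.pi),
            ‖sincMean1 a θ h - partialSum1 a θ N‖ < ε := by
  refine ⟨⟨√3, by positivity, fun a ha N hN h h1 h2 θ _ => ?_⟩, fun a ha ε hε => ?_⟩
  · simpa using norm_sincMean1_sub_partialSum1_le hN ⟨h1, h2⟩ a ha θ 0
  · have htail : Tendsto (fun M => √3 * √(∑' j, (((j + M : ℕ) : ℝ) + 1) * ‖a (j + M)‖ ^ 2))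
        atTop (nhds 0) := by
      simpa only [Real.sqrt_zero, mul_zero] using
        ((tendsto_sum_nat_add fun k => ((k : ℝ) + 1) * ‖a k‖ ^ 2).sqrt).const_mul √3
    obtain ⟨M, hM⟩ := (htail.eventually (gt_mem_nhds (half_pos hε))).exists
    obtain ⟨N₀, hN₀⟩ := eventually_atTop.1 <|
      (tendsto_const_div_atTop_nhds_zero_nat (M * ∑ k ∈ Finset.range M, ‖a k‖)).eventually
        (gt_mem_nhds (half_pos hε))
    refine ⟨N₀, fun N hN₀N hN h h1 h2 θ _ => ?_⟩
    calc ‖sincMean1 a θ h - partialSum1 a θ N‖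
        ≤ ∑ k ∈ Finset.range M, |sincDefect N h k| * ‖a k‖ +
            √3 * √(∑' j, (((j + M : ℕ) : ℝ) + 1) * ‖a (j + M)‖ ^ 2) :=
          norm_sincMean1_sub_partialSum1_le hN ⟨h1, h2⟩ a ha θ M
      _ < ε / 2 + ε / 2 := add_lt_add_of_le_of_lt
          ((sum_range_abs_sincDefect_mul_norm_le hN ⟨h1, h2⟩ a M).trans (hN₀ N hN₀N).le) hM
      _ = ε := add_halves ε
end
end

section
/- Let H be a complex Hilbert space, let f ∈ D(𝔻², H), and let θ = (θ₁,θ₂) ∈ [0,2π)². Define the slice functions f¹(z) = f(z,0) and f²(w) = f(0,w), which belong to D(𝔻, H). If the radial variations V₂f(θ) = ∫_{[0,1]²} ‖∂_{r₁}∂_{r₂} f_r(θ)‖_H dr, V₁f¹(θ₁) = ∫_0^1 ‖∂_{ρ₁} f¹_{ρ₁}(θ₁)‖_H dρ₁, and V₁f²(θ₂) = ∫_0^1 ‖∂_{ρ₂} f²_{ρ₂}(θ₂)‖_H dρ₂ are all finite, then lim_{r→(1,1), r∈[0,1)²} f_r(θ) exists in H and sup_{r∈[0,1)²} ‖f_r(θ)‖_H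 < ∞. -/
open MeasureTheory Filter Complex Set

noncomputable section

/-- The mixed radial derivative
`∂_{r₁}∂_{r₂} f_r(θ) = ∑_α α₁ α₂ r₁^{α₁-1} r₂^{α₂-1} e^{i(α₁θ₁+α₂θ₂)} a_α`. -/
def radialDeriv2 {H : Type*} [NormedAddCommGroup H] [NormedSpace ℂ H]
    (a : ℕ × ℕ → H) (θ r : ℝ × ℝ) : H :=
  ∑' α : ℕ × ℕ, (((α.1 : ℂ) * (r.1 : ℂ) ^ (α.1 - 1)) * ((α.2 : ℂ) * (r.2 : ℂ) ^ (α.2 - 1)) *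
    Complex.exp (Complex.I * ((α.1 : ℂ) * (θ.1 : ℂ) + (α.2 : ℂ) * (θ.2 : ℂ)))) • a α

/-- The one-variable radial derivative `∂_ρ g_ρ(θ) = ∑_k k ρ^{k-1} e^{ikθ} b_k`. -/
def radialDeriv1 {H : Type*} [NormedAddCommGroup H] [NormedSpace ℂ H]
    (b : ℕ → H) (θ ρ : ℝ) : H :=
  ∑' k : ℕ, ((k : ℂ) * (ρ : ℂ) ^ (k - 1) * Complex.exp (Complex.I * k * θ)) • b k

/-! On `[0,1)²` the coefficients are bounded and all the series converge absolutely, so the radial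
derivatives can be integrated term by term. Since `∫₀ᵗ k ρ^(k-1) dρ = t^k - 0^k`, this gives the
inclusion–exclusion identity
`f_r = f_0 + ∫_{[0,r₁]} ∂f¹ + ∫_{[0,r₂]} ∂f² + ∫_{[0,r₁]×[0,r₂]} ∂₁∂₂f`.
Finite radial variation says that the three integrands are integrable on `[0,1]` and `[0,1]²`, so
the right-hand side converges as `r → (1,1)` and is bounded by `‖f_0‖` plus the three variations. -/

open scoped Topology ENNReal

theorem aestronglyMeasurable_tsum {ι X E : Type*} [MeasurableSpace X] {μ : Measure X}
    [NormedAddCommGroup E] [Countable ι] {f : ι → X → E}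
    (hf : ∀ i, AEStronglyMeasurable (f i) μ) (hs : ∀ᵐ x ∂μ, Summable fun i => f i x) :
    AEStronglyMeasurable (fun x => ∑' i, f i x) μ :=
  aestronglyMeasurable_of_tendsto_ae atTop
    (fun s => Finset.aestronglyMeasurable_fun_sum s fun i _ => hf i)
    (hs.mono fun _ hx => hx.hasSum)

section SeriesIntegration

variable {ι X E : Type*} [MeasurableSpace X] {μ : Measure X}
  [NormedAddCommGroup E] [NormedSpace ℂ E] {v : ι → E} {B : ι → ℝ} {C : ℝ}

theorem norm_smul_le_mul_of_le {z : ℂ} {w : E} {b : ℝ} (hz : ‖z‖ ≤ b) (hw : ‖w‖ ≤ C) :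
    ‖z • w‖ ≤ b * C := by
  rw [norm_smul]
  exact mul_le_mul hz hw (norm_nonneg _) ((norm_nonneg _).trans hz)

theorem summable_smul_of_norm_le [CompleteSpace E] {c : ι → ℂ} (hB : Summable B)
    (hc : ∀ i, ‖c i‖ ≤ B i) (hv : ∀ i, ‖v i‖ ≤ C) : Summable fun i => c i • v i :=
  (hB.mul_right C).of_norm_bounded fun i => norm_smul_le_mul_of_le (hc i) (hv i)

theorem hasSum_integral_tsum_smul [Countable ι] [CompleteSpace E] [IsFiniteMeasure μ]
    {c : ι → X → ℂ} (hc : ∀ i, AEStronglyMeasurable (c i) μ)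
    (hcB : ∀ i, ∀ᵐ x ∂μ, ‖c i x‖ ≤ B i) (hB : Summable B) (hv : ∀ i, ‖v i‖ ≤ C) :
    HasSum (fun i => (∫ x, c i x ∂μ) • v i) (∫ x, ∑' i, c i x • v i ∂μ) := by
  simp_rw [← integral_smul_const]
  exact hasSum_integral_of_dominated_convergence (fun i _ => B i * C)
    (fun i => (hc i).smul_const (v i))
    (fun i => (hcB i).mono fun x hx => norm_smul_le_mul_of_le hx (hv i))
    (ae_of_all _ fun _ => hB.mul_right C) (integrable_const _)
    ((ae_all_iff.2 hcB).mono fun x hx => (summable_smul_of_norm_le hB hx hv).hasSum)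

end SeriesIntegration

section SetIntegral

variable {ι X E : Type*} [MeasurableSpace X] {μ : Measure X}
  [NormedAddCommGroup E] [NormedSpace ℝ E] {g : X → E} {S : Set X}

theorem tendsto_setIntegral_of_tendsto_measure {l : Filter ι} {s : ι → Set X}
    (hg : IntegrableOn g S μ) (hs : ∀ i, MeasurableSet (s i)) (hsS : ∀ᶠ i in l, s i ⊆ S)
    (hS : μ S ≠ ∞) (hμ : Tendsto (fun i => μ (s i)) l (𝓝 (μ S))) :
    Tendsto (fun i => ∫ x in s i, g x ∂μ) l (𝓝 (∫ x in S, g x ∂μ)) := by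
  have hdiff : Tendsto (fun i => μ.restrict S (S \ s i)) l (𝓝 0) := by
    have h := ENNReal.Tendsto.sub tendsto_const_nhds hμ (Or.inl hS)
    rw [tsub_self] at h
    refine h.congr' (hsS.mono fun i hi => ?_)
    change μ S - μ (s i) = μ.restrict S (S \ s i)
    rw [Measure.restrict_eq_self _ sdiff_subset,
      measure_sdiff hi (hs i).nullMeasurableSet (measure_ne_top_of_subset hi hS)]
  have hrest := (tendsto_const_nhds (x := ∫ x in S, g x ∂μ)).sub
    (Integrable.tendsto_setIntegral_nhds_zero hg hdiff)
  rw [sub_zero] at hrest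
  refine hrest.congr' (hsS.mono fun i hi => ?_)
  rw [Measure.restrict_restrict_of_subset sdiff_subset, setIntegral_sdiff (hs i) hg hi,
    sub_sub_cancel]

theorem norm_setIntegral_le_of_subset {s : Set X} (hg : IntegrableOn g S μ) (hs : s ⊆ S) :
    ‖∫ x in s, g x ∂μ‖ ≤ ∫ x in S, ‖g x‖ ∂μ :=
  (norm_integral_le_integral_norm _).trans
    (setIntegral_mono_set hg.norm (ae_of_all _ fun _ => norm_nonneg _) hs.eventuallyLE)

theorem continuous_volume_Icc (a : ℝ) : Continuous fun t : ℝ => volume (Icc a t) := by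
  simp_rw [Real.volume_Icc]
  exact ENNReal.continuous_ofReal.comp (continuous_id.sub continuous_const)

theorem tendsto_setIntegral_Icc {g : ℝ → E} (hg : IntegrableOn g (Icc 0 1)) :
    Tendsto (fun t => ∫ ρ in Icc 0 t, g ρ) (𝓝[≤] 1) (𝓝 (∫ ρ in Icc 0 1, g ρ)) :=
  tendsto_setIntegral_of_tendsto_measure hg (fun _ => measurableSet_Icc)
    (eventually_nhdsWithin_of_forall fun _ ht => Icc_subset_Icc_right ht) measure_Icc_lt_top.ne
    ((continuous_volume_Icc 0).continuousAt.mono_left nhdsWithin_le_nhds)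

theorem tendsto_setIntegral_Icc_prod_Icc {g : ℝ × ℝ → E}
    (hg : IntegrableOn g (Icc 0 1 ×ˢ Icc 0 1)) :
    Tendsto (fun t : ℝ × ℝ => ∫ ρ in Icc 0 t.1 ×ˢ Icc 0 t.2, g ρ) (𝓝[≤] 1 ×ˢ 𝓝[≤] 1)
      (𝓝 (∫ ρ in Icc 0 1 ×ˢ Icc 0 1, g ρ)) := by
  have hvol : ∀ s t : Set ℝ, volume (s ×ˢ t) = volume s * volume t := fun s t => by
    rw [Measure.volume_eq_prod, Measure.prod_prod]
  have hcont : Tendsto (fun t : ℝ => volume (Icc 0 t)) (𝓝[≤] 1) (𝓝 (volume (Icc (0 : ℝ) 1))) :=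
    (continuous_volume_Icc 0).continuousAt.mono_left nhdsWithin_le_nhds
  refine tendsto_setIntegral_of_tendsto_measure hg
    (fun _ => measurableSet_Icc.prod measurableSet_Icc) ?_
    (by rw [hvol]; exact ENNReal.mul_ne_top measure_Icc_lt_top.ne measure_Icc_lt_top.ne) ?_
  · filter_upwards [prod_mem_prod self_mem_nhdsWithin self_mem_nhdsWithin] with t ht
    exact prod_mono (Icc_subset_Icc_right ht.1) (Icc_subset_Icc_right ht.2)
  · simp_rw [hvol]
    exact ENNReal.Tendsto.mul (hcont.comp tendsto_fst) (Or.inr measure_Icc_lt_top.ne)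
      (hcont.comp tendsto_snd) (Or.inr measure_Icc_lt_top.ne)

end SetIntegral

theorem exists_norm_le_of_summable_mul_sq {ι E : Type*} [SeminormedAddCommGroup E] {a : ι → E}
    {w : ι → ℝ} (hw : ∀ i, 1 ≤ w i) (h : Summable fun i => w i * ‖a i‖ ^ 2) :
    ∃ C, ∀ i, ‖a i‖ ≤ C :=
  ⟨√(∑' i, w i * ‖a i‖ ^ 2), fun i => Real.le_sqrt_of_sq_le <|
    (le_mul_of_one_le_left (sq_nonneg _) (hw i)).trans <|
      h.le_tsum i fun j _ => mul_nonneg (zero_le_one.trans (hw j)) (sq_nonneg _)⟩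

section PowerSeries

theorem summable_natCast_mul_pow_pred {t : ℝ} (ht : t ∈ Ico (0 : ℝ) 1) :
    Summable fun k : ℕ => (k : ℝ) * t ^ (k - 1) := by
  rw [← summable_nat_add_iff 1]
  refine ((summable_pow_mul_geometric_of_norm_lt_one 1 ((Real.norm_of_nonneg ht.1).trans_lt
    ht.2)).add (summable_geometric_of_lt_one ht.1 ht.2)).congr fun k => ?_
  push_cast
  ring

theorem summable_natCast_mul_pow_pred_mul {t : ℝ × ℝ} (ht : t ∈ Ico (0 : ℝ) 1 ×ˢ Ico (0 : ℝ) 1) :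
    Summable fun α : ℕ × ℕ => ((α.1 : ℝ) * t.1 ^ (α.1 - 1)) * ((α.2 : ℝ) * t.2 ^ (α.2 - 1)) :=
  (summable_natCast_mul_pow_pred ht.1).mul_of_nonneg (summable_natCast_mul_pow_pred ht.2)
    (fun k => by have := ht.1.1; positivity) (fun k => by have := ht.2.1; positivity)

theorem norm_natCast_mul_pow_pred_le (k : ℕ) {ρ t : ℝ} (h0 : 0 ≤ ρ) (h : ρ ≤ t) :
    ‖(k : ℂ) * (ρ : ℂ) ^ (k - 1)‖ ≤ k * t ^ (k - 1) := by
  rw [norm_mul, norm_pow, Complex.norm_natCast, Complex.norm_real, Real.norm_of_nonneg h0]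
  gcongr

theorem integral_Icc_natCast_mul_pow_pred (k : ℕ) {t : ℝ} (ht : 0 ≤ t) :
    ∫ x in Icc 0 t, (k : ℂ) * (x : ℂ) ^ (k - 1) = (t : ℂ) ^ k - 0 ^ k := by
  rw [integral_Icc_eq_integral_Ioc, ← intervalIntegral.integral_of_le ht,
    intervalIntegral.integral_eq_sub_of_hasDerivAt (f := fun x : ℝ => (x : ℂ) ^ k)
      (fun x _ => (hasDerivAt_pow k (x : ℂ)).comp_ofReal)
      ((by fun_prop : Continuous _).intervalIntegrable _ _)]
  simp

theorem norm_exp_I_mul_natCast_mul (k : ℕ) (φ : ℝ) :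
    ‖Complex.exp (Complex.I * k * φ)‖ = 1 := by
  simp [Complex.norm_exp]

theorem norm_exp_I_mul_natCast_mul_add (α : ℕ × ℕ) (θ : ℝ × ℝ) :
    ‖Complex.exp (Complex.I * ((α.1 : ℂ) * (θ.1 : ℂ) + (α.2 : ℂ) * (θ.2 : ℂ)))‖ = 1 := by
  simp [Complex.norm_exp]

theorem norm_radialDeriv1_coeff_le (k : ℕ) (φ : ℝ) {ρ t : ℝ} (h0 : 0 ≤ ρ) (h : ρ ≤ t) :
    ‖(k : ℂ) * (ρ : ℂ) ^ (k - 1) * Complex.exp (Complex.I * k * φ)‖ ≤ k * t ^ (k - 1) := by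
  rw [norm_mul, norm_exp_I_mul_natCast_mul, mul_one]
  exact norm_natCast_mul_pow_pred_le k h0 h

theorem norm_radialDeriv2_coeff_le (α : ℕ × ℕ) (θ : ℝ × ℝ) {ρ t : ℝ × ℝ}
    (hρ : ρ ∈ Icc 0 t.1 ×ˢ Icc 0 t.2) :
    ‖((α.1 : ℂ) * (ρ.1 : ℂ) ^ (α.1 - 1)) * ((α.2 : ℂ) * (ρ.2 : ℂ) ^ (α.2 - 1)) *
      Complex.exp (Complex.I * ((α.1 : ℂ) * (θ.1 : ℂ) + (α.2 : ℂ) * (θ.2 : ℂ)))‖ ≤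
      (α.1 * t.1 ^ (α.1 - 1)) * (α.2 * t.2 ^ (α.2 - 1)) := by
  rw [norm_mul, norm_exp_I_mul_natCast_mul_add, mul_one, norm_mul]
  exact mul_le_mul (norm_natCast_mul_pow_pred_le _ hρ.1.1 hρ.1.2)
    (norm_natCast_mul_pow_pred_le _ hρ.2.1 hρ.2.2) (norm_nonneg _)
    (by have := hρ.1.1.trans hρ.1.2; positivity)

end PowerSeries

section AbelMean

variable {H : Type*} [NormedAddCommGroup H] [NormedSpace ℂ H] [CompleteSpace H]
  {a : ℕ × ℕ → H} {C : ℝ}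

theorem hasSum_abelMean2 (ha : ∀ α, ‖a α‖ ≤ C) (θ : ℝ × ℝ) {r : ℝ × ℝ}
    (hr : r ∈ Ico (0 : ℝ) 1 ×ˢ Ico (0 : ℝ) 1) :
    HasSum (fun α : ℕ × ℕ => (((r.1 : ℂ) ^ α.1 * (r.2 : ℂ) ^ α.2) *
      Complex.exp (Complex.I * ((α.1 : ℂ) * (θ.1 : ℂ) + (α.2 : ℂ) * (θ.2 : ℂ)))) • a α)
      (abelMean2 a r θ) := by
  refine (summable_smul_of_norm_le ((summable_geometric_of_lt_one hr.1.1 hr.1.2).mul_of_nonneg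
    (summable_geometric_of_lt_one hr.2.1 hr.2.2) (fun k => pow_nonneg hr.1.1 k)
    (fun k => pow_nonneg hr.2.1 k)) (fun α => ?_) ha).hasSum
  rw [norm_mul, norm_exp_I_mul_natCast_mul_add, mul_one, norm_mul, norm_pow, norm_pow,
    Complex.norm_real, Complex.norm_real, Real.norm_of_nonneg hr.1.1, Real.norm_of_nonneg hr.2.1]

theorem hasSum_abelMean2_sub_fst (ha : ∀ α, ‖a α‖ ≤ C) (θ : ℝ × ℝ) {t : ℝ}
    (ht : t ∈ Ico (0 : ℝ) 1) :
    HasSum (fun k : ℕ => (((t : ℂ) ^ k - 0 ^ k) * Complex.exp (Complex.I * k * θ.1)) • a (k, 0))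
      (abelMean2 a (t, 0) θ - abelMean2 a 0 θ) := by
  have h0 := left_mem_Ico.2 (zero_lt_one' ℝ)
  have h := (hasSum_abelMean2 ha θ (r := (t, 0)) ⟨ht, h0⟩).sub
    (hasSum_abelMean2 ha θ (r := 0) ⟨h0, h0⟩)
  rw [← (Prod.mk_left_injective 0).hasSum_iff] at h
  · convert h using 2 with k
    simp only [Function.comp_apply, ← sub_smul, ← sub_mul]
    simp [mul_assoc]
  · rintro ⟨m, n⟩ hmn
    have hn : n ≠ 0 := fun hn => hmn ⟨m, by rw [hn]⟩
    simp [hn]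

theorem hasSum_abelMean2_sub_snd (ha : ∀ α, ‖a α‖ ≤ C) (θ : ℝ × ℝ) {t : ℝ}
    (ht : t ∈ Ico (0 : ℝ) 1) :
    HasSum (fun k : ℕ => (((t : ℂ) ^ k - 0 ^ k) * Complex.exp (Complex.I * k * θ.2)) • a (0, k))
      (abelMean2 a (0, t) θ - abelMean2 a 0 θ) := by
  have h0 := left_mem_Ico.2 (zero_lt_one' ℝ)
  have h := (hasSum_abelMean2 ha θ (r := (0, t)) ⟨h0, ht⟩).sub
    (hasSum_abelMean2 ha θ (r := 0) ⟨h0, h0⟩)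
  rw [← (Prod.mk_right_injective 0).hasSum_iff] at h
  · convert h using 2 with k
    simp only [Function.comp_apply, ← sub_smul, ← sub_mul]
    simp [mul_assoc]
  · rintro ⟨m, n⟩ hmn
    have hm : m ≠ 0 := fun hm => hmn ⟨n, by rw [hm]⟩
    simp [hm]

theorem hasSum_integral_radialDeriv1 {b : ℕ → H} (hb : ∀ k, ‖b k‖ ≤ C) (φ : ℝ) {t : ℝ}
    (ht : t ∈ Ico (0 : ℝ) 1) :
    HasSum (fun k : ℕ => (((t : ℂ) ^ k - 0 ^ k) * Complex.exp (Complex.I * k * φ)) • b k)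
      (∫ ρ in Icc 0 t, radialDeriv1 b φ ρ) := by
  have h : HasSum _ (∫ ρ in Icc 0 t, radialDeriv1 b φ ρ) :=
    hasSum_integral_tsum_smul (μ := volume.restrict (Icc 0 t))
      (c := fun (k : ℕ) (ρ : ℝ) => (k : ℂ) * (ρ : ℂ) ^ (k - 1) * Complex.exp (Complex.I * k * φ))
      (fun k => (by fun_prop : Continuous _).aestronglyMeasurable)
      (fun k => (ae_restrict_mem measurableSet_Icc).mono fun ρ hρ =>
        norm_radialDeriv1_coeff_le k φ hρ.1 hρ.2)
      (summable_natCast_mul_pow_pred ht) hb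
  simpa only [integral_mul_const, integral_Icc_natCast_mul_pow_pred _ ht.1] using h

theorem hasSum_integral_radialDeriv2 (ha : ∀ α, ‖a α‖ ≤ C) (θ : ℝ × ℝ) {t : ℝ × ℝ}
    (ht : t ∈ Ico (0 : ℝ) 1 ×ˢ Ico (0 : ℝ) 1) :
    HasSum (fun α : ℕ × ℕ => ((((t.1 : ℂ) ^ α.1 - 0 ^ α.1) * ((t.2 : ℂ) ^ α.2 - 0 ^ α.2)) *
      Complex.exp (Complex.I * ((α.1 : ℂ) * (θ.1 : ℂ) + (α.2 : ℂ) * (θ.2 : ℂ)))) • a α)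
      (∫ ρ in Icc 0 t.1 ×ˢ Icc 0 t.2, radialDeriv2 a θ ρ) := by
  have : IsFiniteMeasure (volume.restrict (Icc 0 t.1 ×ˢ Icc 0 t.2)) :=
    isFiniteMeasure_restrict.2 (isCompact_Icc.prod isCompact_Icc).measure_lt_top.ne
  have h : HasSum _ (∫ ρ in Icc 0 t.1 ×ˢ Icc 0 t.2, radialDeriv2 a θ ρ) :=
    hasSum_integral_tsum_smul (μ := volume.restrict (Icc 0 t.1 ×ˢ Icc 0 t.2))
      (c := fun (α : ℕ × ℕ) (ρ : ℝ × ℝ) =>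
        ((α.1 : ℂ) * (ρ.1 : ℂ) ^ (α.1 - 1)) * ((α.2 : ℂ) * (ρ.2 : ℂ) ^ (α.2 - 1)) *
          Complex.exp (Complex.I * ((α.1 : ℂ) * (θ.1 : ℂ) + (α.2 : ℂ) * (θ.2 : ℂ))))
      (fun α => (by fun_prop : Continuous _).aestronglyMeasurable)
      (fun α => (ae_restrict_mem (measurableSet_Icc.prod measurableSet_Icc)).mono fun ρ hρ =>
        norm_radialDeriv2_coeff_le α θ hρ)
      (summable_natCast_mul_pow_pred_mul ht) ha
  convert h using 3 with α
  rw [integral_mul_const, Measure.volume_eq_prod,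
    setIntegral_prod_mul (fun x : ℝ => (α.1 : ℂ) * (x : ℂ) ^ (α.1 - 1))
      (fun y : ℝ => (α.2 : ℂ) * (y : ℂ) ^ (α.2 - 1)),
    integral_Icc_natCast_mul_pow_pred _ ht.1.1, integral_Icc_natCast_mul_pow_pred _ ht.2.1]

theorem integral_radialDeriv1_fst (ha : ∀ α, ‖a α‖ ≤ C) (θ : ℝ × ℝ) {t : ℝ}
    (ht : t ∈ Ico (0 : ℝ) 1) :
    ∫ ρ in Icc 0 t, radialDeriv1 (fun k => a (k, 0)) θ.1 ρ =
      abelMean2 a (t, 0) θ - abelMean2 a 0 θ :=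
  (hasSum_integral_radialDeriv1 (fun k => ha (k, 0)) θ.1 ht).unique
    (hasSum_abelMean2_sub_fst ha θ ht)

theorem integral_radialDeriv1_snd (ha : ∀ α, ‖a α‖ ≤ C) (θ : ℝ × ℝ) {t : ℝ}
    (ht : t ∈ Ico (0 : ℝ) 1) :
    ∫ ρ in Icc 0 t, radialDeriv1 (fun k => a (0, k)) θ.2 ρ =
      abelMean2 a (0, t) θ - abelMean2 a 0 θ :=
  (hasSum_integral_radialDeriv1 (fun k => ha (0, k)) θ.2 ht).unique
    (hasSum_abelMean2_sub_snd ha θ ht)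

theorem integral_radialDeriv2 (ha : ∀ α, ‖a α‖ ≤ C) (θ : ℝ × ℝ) {t : ℝ × ℝ}
    (ht : t ∈ Ico (0 : ℝ) 1 ×ˢ Ico (0 : ℝ) 1) :
    ∫ ρ in Icc 0 t.1 ×ˢ Icc 0 t.2, radialDeriv2 a θ ρ =
      abelMean2 a t θ - abelMean2 a (t.1, 0) θ - abelMean2 a (0, t.2) θ + abelMean2 a 0 θ := by
  have h0 := left_mem_Ico.2 (zero_lt_one' ℝ)
  refine (hasSum_integral_radialDeriv2 ha θ ht).unique ?_
  convert (((hasSum_abelMean2 ha θ ht).sub (hasSum_abelMean2 ha θ (r := (t.1, 0)) ⟨ht.1, h0⟩)).sub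
    (hasSum_abelMean2 ha θ (r := (0, t.2)) ⟨h0, ht.2⟩)).add
    (hasSum_abelMean2 ha θ (r := 0) ⟨h0, h0⟩) using 2 with α
  simp only [← sub_smul, ← add_smul, Prod.fst_zero, Prod.snd_zero, Complex.ofReal_zero]
  congr 1
  ring

theorem abelMean2_eq_add_integral (ha : ∀ α, ‖a α‖ ≤ C) (θ : ℝ × ℝ) {r : ℝ × ℝ}
    (hr : r ∈ Ico (0 : ℝ) 1 ×ˢ Ico (0 : ℝ) 1) :
    abelMean2 a r θ = abelMean2 a 0 θ
      + (∫ ρ in Icc 0 r.1, radialDeriv1 (fun k => a (k, 0)) θ.1 ρ)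
      + (∫ ρ in Icc 0 r.2, radialDeriv1 (fun k => a (0, k)) θ.2 ρ)
      + ∫ ρ in Icc 0 r.1 ×ˢ Icc 0 r.2, radialDeriv2 a θ ρ := by
  rw [integral_radialDeriv1_fst ha θ hr.1, integral_radialDeriv1_snd ha θ hr.2,
    integral_radialDeriv2 ha θ hr]
  abel

theorem integrableOn_radialDeriv1 {b : ℕ → H} (hb : ∀ k, ‖b k‖ ≤ C) (φ : ℝ)
    (hV : ∫⁻ ρ in Icc (0 : ℝ) 1, ENNReal.ofReal ‖radialDeriv1 b φ ρ‖ < ⊤) :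
    IntegrableOn (radialDeriv1 b φ) (Icc 0 1) := by
  refine ⟨aestronglyMeasurable_tsum (fun k => (by fun_prop : Continuous _).aestronglyMeasurable)
    ?_, (hasFiniteIntegral_iff_norm _).2 hV⟩
  filter_upwards [ae_restrict_mem measurableSet_Icc, ae_restrict_of_ae (Measure.ae_ne volume 1)]
    with ρ hρ hρ1
  exact summable_smul_of_norm_le (summable_natCast_mul_pow_pred ⟨hρ.1, hρ.2.lt_of_ne hρ1⟩)
    (fun k => norm_radialDeriv1_coeff_le k φ hρ.1 le_rfl) hb

theorem integrableOn_radialDeriv2 (ha : ∀ α, ‖a α‖ ≤ C) (θ : ℝ × ℝ)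
    (hV : ∫⁻ ρ in Icc (0 : ℝ) 1 ×ˢ Icc (0 : ℝ) 1, ENNReal.ofReal ‖radialDeriv2 a θ ρ‖ < ⊤) :
    IntegrableOn (radialDeriv2 a θ) (Icc 0 1 ×ˢ Icc 0 1) := by
  refine ⟨aestronglyMeasurable_tsum (fun α => (by fun_prop : Continuous _).aestronglyMeasurable)
    ?_, (hasFiniteIntegral_iff_norm _).2 hV⟩
  have hne : ∀ᵐ ρ : ℝ × ℝ, ρ.1 ≠ 1 ∧ ρ.2 ≠ 1 := by
    rw [Measure.volume_eq_prod]
    exact (Measure.quasiMeasurePreserving_fst.ae (Measure.ae_ne volume 1)).and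
      (Measure.quasiMeasurePreserving_snd.ae (Measure.ae_ne volume 1))
  filter_upwards [ae_restrict_mem (measurableSet_Icc.prod measurableSet_Icc),
    ae_restrict_of_ae hne] with ρ hρ hρ1
  exact summable_smul_of_norm_le (summable_natCast_mul_pow_pred_mul
      ⟨⟨hρ.1.1, hρ.1.2.lt_of_ne hρ1.1⟩, hρ.2.1, hρ.2.2.lt_of_ne hρ1.2⟩)
    (fun α => norm_radialDeriv2_coeff_le α θ (t := ρ) ⟨⟨hρ.1.1, le_rfl⟩, hρ.2.1, le_rfl⟩) ha

end AbelMean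

theorem radial_limit_of_finite_variation_general (H : Type*) [NormedAddCommGroup H]
    [InnerProductSpace ℂ H] [CompleteSpace H]
    (a : ℕ × ℕ → H)
    (hf : Summable fun α : ℕ × ℕ => ((α.1 : ℝ) + 1) * ((α.2 : ℝ) + 1) * ‖a α‖ ^ 2)
    (θ : ℝ × ℝ)
    (hV2 : (∫⁻ r in Set.Icc (0 : ℝ) 1 ×ˢ Set.Icc (0 : ℝ) 1,
      ENNReal.ofReal ‖radialDeriv2 a θ r‖) < ⊤)
    (hV1 : (∫⁻ ρ in Set.Icc (0 : ℝ) 1,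
      ENNReal.ofReal ‖radialDeriv1 (fun k => a (k, 0)) θ.1 ρ‖) < ⊤)
    (hV1' : (∫⁻ ρ in Set.Icc (0 : ℝ) 1,
      ENNReal.ofReal ‖radialDeriv1 (fun k => a (0, k)) θ.2 ρ‖) < ⊤) :
    (∃ L : H, Filter.Tendsto (fun r : ℝ × ℝ => abelMean2 a r θ)
      (nhdsWithin (1, 1) (Set.Ico (0 : ℝ) 1 ×ˢ Set.Ico (0 : ℝ) 1)) (nhds L)) ∧
    ∃ M : ℝ, ∀ r ∈ Set.Ico (0 : ℝ) 1 ×ˢ Set.Ico (0 : ℝ) 1, ‖abelMean2 a r θ‖ ≤ M := by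
  obtain ⟨C, ha⟩ := exists_norm_le_of_summable_mul_sq
    (fun α => one_le_mul_of_one_le_of_one_le (by simp) (by simp)) hf
  have h₁ := integrableOn_radialDeriv1 (fun k => ha (k, 0)) θ.1 hV1
  have h₂ := integrableOn_radialDeriv1 (fun k => ha (0, k)) θ.2 hV1'
  have h₁₂ := integrableOn_radialDeriv2 ha θ hV2
  have hl : 𝓝[Ico 0 1 ×ˢ Ico 0 1] ((1 : ℝ), (1 : ℝ)) ≤ 𝓝[≤] 1 ×ˢ 𝓝[≤] 1 := by
    rw [nhdsWithin_prod_eq]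
    have hIco : Ico (0 : ℝ) 1 ⊆ Iic 1 := Ico_subset_Icc_self.trans Icc_subset_Iic_self
    exact Filter.prod_mono (nhdsWithin_mono _ hIco) (nhdsWithin_mono _ hIco)
  have hlim := (((tendsto_const_nhds (x := abelMean2 a 0 θ)).add
    ((tendsto_setIntegral_Icc h₁).comp tendsto_fst)).add
    ((tendsto_setIntegral_Icc h₂).comp tendsto_snd)).add (tendsto_setIntegral_Icc_prod_Icc h₁₂)
  refine ⟨⟨_, (hlim.mono_left hl).congr'
      (eventually_nhdsWithin_of_forall fun r hr => (abelMean2_eq_add_integral ha θ hr).symm)⟩,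
    ‖abelMean2 a 0 θ‖ + (∫ ρ in Icc 0 1, ‖radialDeriv1 (fun k => a (k, 0)) θ.1 ρ‖)
      + (∫ ρ in Icc 0 1, ‖radialDeriv1 (fun k => a (0, k)) θ.2 ρ‖)
      + ∫ ρ in Icc 0 1 ×ˢ Icc 0 1, ‖radialDeriv2 a θ ρ‖, fun r hr => ?_⟩
  rw [abelMean2_eq_add_integral ha θ hr]
  exact norm_add₄_le.trans <| add_le_add (add_le_add (add_le_add le_rfl
    (norm_setIntegral_le_of_subset h₁ (Icc_subset_Icc_right hr.1.2.le)))
    (norm_setIntegral_le_of_subset h₂ (Icc_subset_Icc_right hr.2.2.le)))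
    (norm_setIntegral_le_of_subset h₁₂
      (prod_mono (Icc_subset_Icc_right hr.1.2.le) (Icc_subset_Icc_right hr.2.2.le)))

/-- **Lemma (finite radial variation implies radial limits, `n = 2`).** If `f ∈ 𝒟(𝔻², H)`
and the radial variations `V₂f(θ)`, `V₁f¹(θ₁)`, `V₁f²(θ₂)` of `f` and its slice functions
`f¹(z) = f(z,0)`, `f²(w) = f(0,w)` are finite, then `lim_{r→(1,1)} f_r(θ)` exists and
`sup_r ‖f_r(θ)‖ < ∞`. -/
theorem radial_limit_of_finite_variation (H : Type*) [NormedAddCommGroup H]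
    [InnerProductSpace ℂ H] [CompleteSpace H]
    (a : ℕ × ℕ → H)
    (hf : Summable fun α : ℕ × ℕ => ((α.1 : ℝ) + 1) * ((α.2 : ℝ) + 1) * ‖a α‖ ^ 2)
    (θ : ℝ × ℝ) (hθ₁ : θ.1 ∈ Set.Ico 0 (2 * Real.pi)) (hθ₂ : θ.2 ∈ Set.Ico 0 (2 * Real.pi))
    (hV2 : (∫⁻ r in Set.Icc (0 : ℝ) 1 ×ˢ Set.Icc (0 : ℝ) 1,
      ENNReal.ofReal ‖radialDeriv2 a θ r‖) < ⊤)
    (hV1 : (∫⁻ ρ in Set.Icc (0 : ℝ) 1,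
      ENNReal.ofReal ‖radialDeriv1 (fun k => a (k, 0)) θ.1 ρ‖) < ⊤)
    (hV1' : (∫⁻ ρ in Set.Icc (0 : ℝ) 1,
      ENNReal.ofReal ‖radialDeriv1 (fun k => a (0, k)) θ.2 ρ‖) < ⊤) :
    (∃ L : H, Filter.Tendsto (fun r : ℝ × ℝ => abelMean2 a r θ)
      (nhdsWithin (1, 1) (Set.Ico (0 : ℝ) 1 ×ˢ Set.Ico (0 : ℝ) 1)) (nhds L)) ∧
    ∃ M : ℝ, ∀ r ∈ Set.Ico (0 : ℝ) 1 ×ˢ Set.Ico (0 : ℝ) 1, ‖abelMean2 a r θ‖ ≤ M :=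
  radial_limit_of_finite_variation_general H a hf θ hV2 hV1 hV1'
end
end

section
/- Let n ≥ 1 and let h(θ) = 9 + (1/2) log(1/|1−e^{iθ}|), H(θ) = h(θ₁)⋯h(θ_n) for θ ∈ ((0,2π))ⁿ. Then there exist constants C > 0 and c₁, c₂ > 0 (depending only on n) such that for all ψ ∈ ((0,2π))ⁿ, c₁ H(ψ) ≤ Re ∏_{j=1}^n (C + log(1/(1−e^{−iψ_j}))) ≤ c₂ H(ψ), where log denotes the principal branch of the complex logarithm on the right half-plane; in particular the real part is nonnegative on ((0,2π))ⁿ. -/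
/-!
Write `w_j = C + log (1 / (1 - e^{-iψ_j}))`. Its real part is `C - 18 + 2 h(ψ_j)` and its
imaginary part, the argument of a point of the closed right half-plane, is at most `π/2` in
absolute value. Since `h ≥ 8`, this gives `2 h(ψ_j) ≤ |w_j| ≤ C h(ψ_j)` and `|arg w_j| ≤ 2 / C`.
Taking `C = 18 + 2n` the arguments add up to at most `1`, so `Re ∏ w_j = (∏ |w_j|) cos (∑ arg w_j)`
lies between `½ ∏ |w_j|` and `∏ |w_j|`.
-/

open MeasureTheory Filter Complex Set

noncomputable section

/-- The one-variable logarithmic kernel `h(θ) = 9 + (1/2) log(1/|1−e^{iθ}|)`. -/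
def hKernel (θ : ℝ) : ℝ :=
  9 + (1 / 2) * Real.log (1 / ‖1 - Complex.exp (θ * Complex.I)‖)

open Finset

lemma Complex.abs_arg_le_abs_im_div_re {z : ℂ} (hz : 0 < z.re) : |arg z| ≤ |z.im| / z.re := by
  have hlt : |arg z| < Real.pi / 2 := abs_arg_lt_pi_div_two_iff.2 (Or.inl hz)
  rw [← abs_of_pos hz, ← abs_div, ← tan_arg]
  rcases le_total 0 (arg z) with h | h
  · rw [abs_of_nonneg h] at hlt ⊢
    exact (Real.le_tan h hlt).trans (le_abs_self _)
  · rw [abs_of_nonpos h] at hlt ⊢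
    have := Real.le_tan (neg_nonneg.2 h) hlt
    rw [Real.tan_neg] at this
    exact this.trans (neg_le_abs _)

lemma Complex.re_prod_eq_prod_norm_mul_cos {ι : Type*} (s : Finset ι) (z : ι → ℂ) :
    (∏ j ∈ s, z j).re = (∏ j ∈ s, ‖z j‖) * Real.cos (∑ j ∈ s, arg (z j)) := by
  conv_lhs => rw [← prod_congr rfl fun j _ => norm_mul_exp_arg_mul_I (z j)]
  rw [prod_mul_distrib, ← exp_sum, ← sum_mul, ← ofReal_prod, ← ofReal_sum, re_ofReal_mul,
    exp_ofReal_mul_I_re]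

lemma Complex.prod_norm_div_two_le_re_prod {ι : Type*} (s : Finset ι) (z : ι → ℂ)
    (hz : ∑ j ∈ s, |arg (z j)| ≤ 1) : (∏ j ∈ s, ‖z j‖) / 2 ≤ (∏ j ∈ s, z j).re := by
  have hsum : |∑ j ∈ s, arg (z j)| ≤ 1 := (abs_sum_le_sum_abs _ _).trans hz
  have hcos : 1 / 2 ≤ Real.cos (∑ j ∈ s, arg (z j)) := by
    have hquad := Real.one_sub_sq_div_two_le_cos (x := ∑ j ∈ s, arg (z j))
    nlinarith [sq_abs (∑ j ∈ s, arg (z j)), abs_nonneg (∑ j ∈ s, arg (z j))]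
  have hnorm : 0 ≤ ∏ j ∈ s, ‖z j‖ := prod_nonneg fun j _ => norm_nonneg _
  rw [re_prod_eq_prod_norm_mul_cos]
  nlinarith

lemma Finset.pow_card_mul_prod_le_prod {ι : Type*} {s : Finset ι} {f g : ι → ℝ} {c : ℝ}
    (hc : 0 ≤ c) (hf : ∀ j ∈ s, 0 ≤ f j) (h : ∀ j ∈ s, c * f j ≤ g j) :
    c ^ #s * ∏ j ∈ s, f j ≤ ∏ j ∈ s, g j := by
  rw [← prod_const, ← prod_mul_distrib]
  exact prod_le_prod (fun j hj => mul_nonneg hc (hf j hj)) h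

lemma Finset.prod_le_pow_card_mul_prod {ι : Type*} {s : Finset ι} {f g : ι → ℝ} {c : ℝ}
    (hg : ∀ j ∈ s, 0 ≤ g j) (h : ∀ j ∈ s, g j ≤ c * f j) :
    ∏ j ∈ s, g j ≤ c ^ #s * ∏ j ∈ s, f j := by
  rw [← prod_const, ← prod_mul_distrib]
  exact prod_le_prod hg h

lemma norm_one_sub_exp_neg_mul_I (θ : ℝ) : ‖1 - exp (-(θ * I))‖ = ‖1 - exp (θ * I)‖ := by
  rw [← RCLike.norm_conj, map_sub, map_one, ← exp_conj]
  simp [conj_I]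

lemma hKernel_eq (θ : ℝ) : hKernel θ = 9 - Real.log ‖1 - exp (θ * I)‖ / 2 := by
  simp only [hKernel, one_div, Real.log_inv]
  ring

lemma eight_le_hKernel (θ : ℝ) : 8 ≤ hKernel θ := by
  have hnorm : ‖1 - exp (θ * I)‖ ≤ 2 := by
    calc ‖1 - exp (θ * I)‖ ≤ ‖(1 : ℂ)‖ + ‖exp (θ * I)‖ := norm_sub_le _ _
      _ = 2 := by rw [norm_exp_ofReal_mul_I]; norm_num
  have hlog := Real.log_le_self (norm_nonneg (1 - exp (θ * I)))
  rw [hKernel_eq]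
  linarith

lemma hKernel_nonneg (θ : ℝ) : 0 ≤ hKernel θ := by
  linarith [eight_le_hKernel θ]

lemma re_log_inv_one_sub_exp (θ : ℝ) :
    (log (1 / (1 - exp (-(θ * I))))).re = 2 * hKernel θ - 18 := by
  rw [log_re, norm_div, norm_one, norm_one_sub_exp_neg_mul_I, hKernel]
  ring

lemma abs_im_log_inv_one_sub_exp_le (θ : ℝ) :
    |(log (1 / (1 - exp (-(θ * I))))).im| ≤ Real.pi / 2 := by
  rw [log_im, abs_arg_le_pi_div_two_iff, one_div, inv_re]
  refine div_nonneg ?_ (normSq_nonneg _)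
  simpa [exp_re] using Real.cos_le_one θ

def kernelFactor (C θ : ℝ) : ℂ :=
  C + log (1 / (1 - exp (-(θ * I))))

lemma re_kernelFactor (C θ : ℝ) : (kernelFactor C θ).re = C - 18 + 2 * hKernel θ := by
  rw [kernelFactor, add_re, ofReal_re, re_log_inv_one_sub_exp]
  ring

section

variable {C : ℝ} (hC : 18 ≤ C) (θ : ℝ)
include hC

lemma two_mul_hKernel_le_norm_kernelFactor : 2 * hKernel θ ≤ ‖kernelFactor C θ‖ :=
  (re_le_norm _).trans' (by rw [re_kernelFactor]; linarith)

lemma norm_kernelFactor_le : ‖kernelFactor C θ‖ ≤ C * hKernel θ := by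
  have him := abs_im_log_inv_one_sub_exp_le θ
  have h8 := eight_le_hKernel θ
  refine (norm_le_abs_re_add_abs_im _).trans ?_
  rw [re_kernelFactor, abs_of_nonneg (by linarith)]
  simp only [kernelFactor, add_im, ofReal_im, zero_add]
  nlinarith [Real.pi_lt_four]

lemma abs_arg_kernelFactor_le : |arg (kernelFactor C θ)| ≤ 2 / C := by
  have him := abs_im_log_inv_one_sub_exp_le θ
  have h8 := eight_le_hKernel θ
  have hre : 0 < (kernelFactor C θ).re := by rw [re_kernelFactor]; linarith
  refine (abs_arg_le_abs_im_div_re hre).trans ?_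
  rw [div_le_div_iff₀ hre (by linarith), re_kernelFactor]
  simp only [kernelFactor, add_im, ofReal_im, zero_add]
  nlinarith [Real.pi_lt_d2, mul_le_mul_of_nonneg_right him (by linarith : (0 : ℝ) ≤ C)]

end

lemma re_prod_kernelFactor_bounds {ι : Type*} (s : Finset ι) (ψ : ι → ℝ) {C : ℝ} (hC : 18 ≤ C)
    (hs : 2 * #s ≤ C) :
    2 ^ #s / 2 * ∏ j ∈ s, hKernel (ψ j) ≤ (∏ j ∈ s, kernelFactor C (ψ j)).re ∧
      (∏ j ∈ s, kernelFactor C (ψ j)).re ≤ C ^ #s * ∏ j ∈ s, hKernel (ψ j) := by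
  have harg : ∑ j ∈ s, |arg (kernelFactor C (ψ j))| ≤ 1 := by
    calc ∑ j ∈ s, |arg (kernelFactor C (ψ j))| ≤ #s • (2 / C) :=
          sum_le_card_nsmul _ _ _ fun j _ => abs_arg_kernelFactor_le hC (ψ j)
      _ ≤ 1 := by
          rw [nsmul_eq_mul, ← mul_div_assoc, div_le_one (by linarith)]
          linarith
  have hlower := pow_card_mul_prod_le_prod (s := s) zero_le_two (fun j _ => hKernel_nonneg (ψ j))
    fun j _ => two_mul_hKernel_le_norm_kernelFactor hC (ψ j)
  have hupper := prod_le_pow_card_mul_prod (s := s) (fun j _ => norm_nonneg _)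
    fun j _ => norm_kernelFactor_le hC (ψ j)
  constructor
  · linarith [prod_norm_div_two_le_re_prod s _ harg]
  · calc (∏ j ∈ s, kernelFactor C (ψ j)).re ≤ ‖∏ j ∈ s, kernelFactor C (ψ j)‖ := re_le_norm _
      _ = ∏ j ∈ s, ‖kernelFactor C (ψ j)‖ := norm_prod _ _
      _ ≤ _ := hupper

theorem holomorphic_kernel_comparable_general (n : ℕ) :
    ∃ C c₁ c₂ : ℝ, 0 < C ∧ 0 < c₁ ∧ 0 < c₂ ∧
      ∀ ψ : Fin n → ℝ, (∀ j, ψ j ∈ Set.Ioo (0 : ℝ) (2 * Real.pi)) →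
        c₁ * ∏ j, hKernel (ψ j) ≤
          (∏ j, ((C : ℂ) + Complex.log (1 / (1 - Complex.exp (-(ψ j * Complex.I)))))).re ∧
        (∏ j, ((C : ℂ) + Complex.log (1 / (1 - Complex.exp (-(ψ j * Complex.I)))))).re ≤
          c₂ * ∏ j, hKernel (ψ j) ∧
        0 ≤ (∏ j, ((C : ℂ) + Complex.log (1 / (1 - Complex.exp (-(ψ j * Complex.I)))))).re := by
  refine ⟨18 + 2 * n, 2 ^ n / 2, (18 + 2 * n) ^ n, by positivity, by positivity, by positivity,
    fun ψ _ => ?_⟩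
  obtain ⟨hlower, hupper⟩ := re_prod_kernelFactor_bounds univ ψ (C := 18 + 2 * n)
    (by linarith [n.cast_nonneg (α := ℝ)]) (by simp)
  simp only [card_univ, Fintype.card_fin] at hlower hupper
  have hH : 0 ≤ ∏ j, hKernel (ψ j) := prod_nonneg fun j _ => hKernel_nonneg (ψ j)
  exact ⟨hlower, hupper, (mul_nonneg (by positivity) hH).trans hlower⟩

/-- **Lemma (comparison of the holomorphic kernel with the `n`-logarithmic kernel).**
For `H(θ) = h(θ₁)⋯h(θ_n)`, there exist `C, c₁, c₂ > 0` (depending only on `n`) with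
`c₁ H(ψ) ≤ Re ∏_j (C + log(1/(1−e^{−iψ_j}))) ≤ c₂ H(ψ)` for all `ψ ∈ (0,2π)ⁿ`;
in particular the real part is nonnegative. -/
theorem holomorphic_kernel_comparable (n : ℕ) (hn : 1 ≤ n) :
    ∃ C c₁ c₂ : ℝ, 0 < C ∧ 0 < c₁ ∧ 0 < c₂ ∧
      ∀ ψ : Fin n → ℝ, (∀ j, ψ j ∈ Set.Ioo (0 : ℝ) (2 * Real.pi)) →
        c₁ * ∏ j, hKernel (ψ j) ≤
          (∏ j, ((C : ℂ) + Complex.log (1 / (1 - Complex.exp (-(ψ j * Complex.I)))))).re ∧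
        (∏ j, ((C : ℂ) + Complex.log (1 / (1 - Complex.exp (-(ψ j * Complex.I)))))).re ≤
          c₂ * ∏ j, hKernel (ψ j) ∧
        0 ≤ (∏ j, ((C : ℂ) + Complex.log (1 / (1 - Complex.exp (-(ψ j * Complex.I)))))).re :=
  holomorphic_kernel_comparable_general n
end
end
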